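/- arXiv:2306.03888 — 6 statements merged into one kernel-verified Lean document; each statement's English description precedes it below -/
import Mathlib

section
/- For every n ≥ 2, the Newton polytope of α_n equals the triangle in ℝ² with vertices (1,0), (n,0) and (0,n); that is, the convex hull of the set of exponent vectors (a,b) ∈ ℕ² of monomials X^a Y^b appearing in α_n with nonzero coefficient is the convex hull of {(1,0), (n,0), (0,n)}. -/
open MvPolynomial

/-- The 2×2 matrix over `𝔽₂[X,Y]` with rows `(X+Y, 1)` and `(X, 1)`. -/
noncomputable def stmtM : Matrix (Fin 2) (Fin 2) (MvPolynomial (Fin 2) (ZMod 2)) :=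
  !![X 0 + X 1, 1; X 0, 1]

/-- `α_n` is the `(1,1)` entry of the `n`-th power of `stmtM`. -/
noncomputable def stmtAlpha (n : ℕ) : MvPolynomial (Fin 2) (ZMod 2) :=
  (stmtM ^ n) 0 0

noncomputable def abP : ℕ → MvPolynomial (Fin 2) (ZMod 2) × MvPolynomial (Fin 2) (ZMod 2)
  | 0 => (1, 0)
  | n+1 => (X 0 * (abP n).1 + X 1 * (abP n).1 + X 0 * (abP n).2, (abP n).1 + (abP n).2)

lemma abP_eq (n : ℕ) : (stmtM ^ n) 0 0 = (abP n).1 ∧ (stmtM ^ n) 0 1 = (abP n).2 := by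
  induction n with
  | zero => simp [abP, pow_zero, Matrix.one_apply]
  | succ n ih =>
    obtain ⟨h1, h2⟩ := ih
    rw [pow_succ]
    constructor <;>
    · simp only [Matrix.mul_apply, Fin.sum_univ_two, h1, h2, abP]
      simp only [stmtM, Matrix.cons_val', Matrix.cons_val_zero, Matrix.cons_val_one,
        Matrix.head_cons, Matrix.empty_val', Matrix.cons_val_fin_one, Matrix.head_fin_const,
        Matrix.of_apply]
      ring

noncomputable def sd (p q : ℕ) : Fin 2 →₀ ℕ := Finsupp.single 0 p + Finsupp.single 1 q

lemma sd_apply0 (p q : ℕ) : sd p q 0 = p := by simp [sd]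
lemma sd_apply1 (p q : ℕ) : sd p q 1 = q := by simp [sd, Finsupp.single_apply]
lemma sd_succ_left (p q : ℕ) : sd (p+1) q = Finsupp.single 0 1 + sd p q := by
  simp [sd, ← add_assoc, ← Finsupp.single_add, add_comm]
lemma sd_succ_right (p q : ℕ) : sd p (q+1) = Finsupp.single 1 1 + sd p q := by
  ext i; simp [sd, Finsupp.single_apply]; fin_cases i <;> simp <;> omega
lemma sd_zero : sd 0 0 = 0 := by simp [sd]

lemma coeffXmul (s : Fin 2) (m : Fin 2 →₀ ℕ) (p : MvPolynomial (Fin 2) (ZMod 2)) :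
    coeff m (X s * p) = if m s = 0 then 0 else coeff (m - Finsupp.single s 1) p := by
  rw [coeff_X_mul']
  by_cases h : m s = 0 <;> simp [Finsupp.mem_support_iff, h]

lemma sub_apply_same (m : Fin 2 →₀ ℕ) (s : Fin 2) :
    (m - Finsupp.single s 1 : Fin 2 →₀ ℕ) s = m s - 1 := by simp [Finsupp.sub_apply]
lemma sub_apply_other (m : Fin 2 →₀ ℕ) (s t : Fin 2) (h : s ≠ t) :
    (m - Finsupp.single s 1 : Fin 2 →₀ ℕ) t = m t := by
  simp [Finsupp.sub_apply, Finsupp.single_apply, h]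

lemma invariant (n : ℕ) :
    (∀ d : Fin 2 →₀ ℕ, coeff d (abP n).1 ≠ 0 → d 0 + d 1 ≤ n) ∧
    (∀ d : Fin 2 →₀ ℕ, coeff d (abP n).1 ≠ 0 → d 0 = 0 → d 1 = n) ∧
    (∀ d : Fin 2 →₀ ℕ, coeff d (abP n).2 ≠ 0 → d 0 + d 1 ≤ n) ∧
    (∀ d : Fin 2 →₀ ℕ, coeff d (abP n).2 ≠ 0 → d 1 = 0 → d 0 < n) ∧
    coeff (sd n 0) (abP n).1 = 1 ∧
    coeff (sd 0 n) (abP n).1 = 1 ∧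
    (1 ≤ n → coeff (sd 1 0) (abP n).1 = 1) ∧
    (1 ≤ n → coeff 0 (abP n).2 = 1) := by
  induction n with
  | zero =>
    refine ⟨?_, ?_, ?_, ?_, ?_, ?_, ?_, ?_⟩ <;>
      simp [abP, sd_zero, coeff_zero, MvPolynomial.coeff_one]
  | succ n ih =>
    obtain ⟨h1, h2, h3, h4, h5, h6, h7, h8⟩ := ih
    set a := (abP n).1 with ha
    set b := (abP n).2 with hb
    have hA : (abP (n+1)).1 = X 0 * a + X 1 * a + X 0 * b := rfl
    have hB : (abP (n+1)).2 = a + b := rfl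
    have key : ∀ d : Fin 2 →₀ ℕ, coeff d (abP (n+1)).1 =
        coeff d (X 0 * a) + coeff d (X 1 * a) + coeff d (X 0 * b) := by
      intro d; rw [hA, coeff_add, coeff_add]
    refine ⟨?_, ?_, ?_, ?_, ?_, ?_, ?_, ?_⟩
    · -- degree bound for a
      intro d hd
      rw [key d] at hd
      have : coeff d (X 0 * a) ≠ 0 ∨ coeff d (X 1 * a) ≠ 0 ∨ coeff d (X 0 * b) ≠ 0 := by
        by_contra hc; push_neg at hc; rw [hc.1, hc.2.1, hc.2.2] at hd; simp at hd
      rcases this with h | h | h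
      · rw [coeffXmul] at h
        by_cases h0 : d 0 = 0
        · simp [h0] at h
        · simp [h0] at h
          have := h1 _ h
          rw [sub_apply_same, sub_apply_other _ _ _ (by decide)] at this
          omega
      · rw [coeffXmul] at h
        by_cases h0 : d 1 = 0
        · simp [h0] at h
        · simp [h0] at h
          have := h1 _ h
          rw [sub_apply_same, sub_apply_other _ _ _ (by decide)] at this
          omega
      · rw [coeffXmul] at h
        by_cases h0 : d 0 = 0
        · simp [h0] at h
        · simp [h0] at h
          have := h3 _ h
          rw [sub_apply_same, sub_apply_other _ _ _ (by decide)] at this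
          omega
    · -- edge condition for a
      intro d hd hd0
      rw [key d, coeffXmul, coeffXmul, coeffXmul, hd0] at hd
      simp at hd
      by_cases h0 : d 1 = 0
      · simp [h0] at hd
      · simp [h0] at hd
        have := h2 _ hd
        rw [sub_apply_other _ _ _ (by decide), sub_apply_same] at this
        have := this hd0
        omega
    · -- degree bound for b
      intro d hd
      rw [hB, coeff_add] at hd
      have : coeff d a ≠ 0 ∨ coeff d b ≠ 0 := by
        by_contra hc; push_neg at hc; rw [hc.1, hc.2] at hd; simp at hd
      rcases this with h | h
      · have := h1 _ h; omega
      · have := h3 _ h; omega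
    · -- b: d1 = 0 → d0 < n+1
      intro d hd hd1
      rw [hB, coeff_add] at hd
      have : coeff d a ≠ 0 ∨ coeff d b ≠ 0 := by
        by_contra hc; push_neg at hc; rw [hc.1, hc.2] at hd; simp at hd
      rcases this with h | h
      · have := h1 _ h; omega
      · have := h4 _ h hd1; omega
    · -- coeff (n+1, 0)
      rw [key, sd_succ_left, coeff_X_mul, coeffXmul, coeffXmul]
      have e0 : (Finsupp.single 0 1 + sd n 0 : Fin 2 →₀ ℕ) 1 = 0 := by
        simp [Finsupp.single_apply, sd_apply1]
      have e1 : (Finsupp.single 0 1 + sd n 0 : Fin 2 →₀ ℕ) 0 = n + 1 := by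
        simp [sd_apply0]; omega
      have e2 : ((Finsupp.single 0 1 + sd n 0 : Fin 2 →₀ ℕ) - Finsupp.single 0 1) = sd n 0 := by
        simp
      rw [e0, e1, e2]
      have : coeff (sd n 0) b = 0 := by
        by_contra hc
        have := h4 _ hc (sd_apply1 n 0)
        rw [sd_apply0] at this; omega
      simp [this, h5]
    · -- coeff (0, n+1)
      rw [key, sd_succ_right, coeff_X_mul, coeffXmul, coeffXmul]
      have e0 : (Finsupp.single 1 1 + sd 0 n : Fin 2 →₀ ℕ) 0 = 0 := by
        simp [Finsupp.single_apply, sd_apply0]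
      rw [e0]
      simp [h6]
    · -- coeff (1,0)
      intro _
      rw [key, coeffXmul, coeffXmul, coeffXmul, sd_apply0, sd_apply1]
      have e2 : (sd 1 0 - Finsupp.single 0 1 : Fin 2 →₀ ℕ) = 0 := by
        ext i; fin_cases i <;> simp [sd, Finsupp.single_apply]
      rw [e2]
      norm_num
      rcases Nat.eq_zero_or_pos n with h | h
      · subst h
        simp [ha, hb, abP, MvPolynomial.coeff_one]
      · have hu : coeff 0 a = 0 := by
          by_contra hc
          have := h2 _ hc rfl
          simp at this; omega
        have hv := h8 h
        rw [hu, hv]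
        decide
    · -- coeff 0 b
      intro _
      rw [hB, coeff_add]
      rcases Nat.eq_zero_or_pos n with h | h
      · subst h
        simp [ha, hb, abP, MvPolynomial.coeff_one]
      · have hu : coeff 0 a = 0 := by
          by_contra hc
          have := h2 _ hc rfl
          simp at this; omega
        rw [hu, h8 h]
        decide

/-- For `n ≥ 2`, the Newton polytope of `α_n`, i.e. the convex hull in
`ℝ²` of the exponent vectors of the monomials appearing with nonzero coefficient,
is the triangle with vertices `(1,0)`, `(n,0)` and `(0,n)`. -/
theorem stmt_3 (n : ℕ) (hn : 2 ≤ n) :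
    convexHull ℝ
        ((fun d : Fin 2 →₀ ℕ => (((d 0 : ℝ), (d 1 : ℝ)) : ℝ × ℝ)) ''
          ↑(stmtAlpha n).support)
      = convexHull ℝ {((1 : ℝ), (0 : ℝ)), ((n : ℝ), (0 : ℝ)), ((0 : ℝ), (n : ℝ))} := by
  have halpha : stmtAlpha n = (abP n).1 := (abP_eq n).1
  obtain ⟨h1, h2, h3, h4, h5, h6, h7, h8⟩ := invariant n
  have hN : (2:ℝ) ≤ (n:ℝ) := by exact_mod_cast hn
  have hN0 : (0:ℝ) < (n:ℝ) := by linarith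
  have hN1 : (0:ℝ) < (n:ℝ) - 1 := by linarith
  set S : Set (ℝ × ℝ) := {((1 : ℝ), (0 : ℝ)), ((n : ℝ), (0 : ℝ)), ((0 : ℝ), (n : ℝ))} with hS
  apply Set.Subset.antisymm
  · apply convexHull_min _ (convex_convexHull ℝ S)
    rintro p ⟨d, hd, rfl⟩
    rw [Finset.mem_coe, mem_support_iff, halpha] at hd
    have hsum := h1 d hd
    have hedge := h2 d hd
    have hkey : n ≤ n * d 0 + d 1 := by
      rcases Nat.eq_zero_or_pos (d 0) with h | h
      · rw [hedge h]; omega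
      · have : n * 1 ≤ n * d 0 := Nat.mul_le_mul_left n h
        omega
    have hsumR : (d 0 : ℝ) + (d 1 : ℝ) ≤ (n:ℝ) := by exact_mod_cast hsum
    have hkeyR : (n:ℝ) ≤ (n:ℝ) * (d 0 : ℝ) + (d 1 : ℝ) := by exact_mod_cast hkey
    have hBR : (0:ℝ) ≤ (d 1 : ℝ) := by positivity
    set A : ℝ := (d 0 : ℝ)
    set B : ℝ := (d 1 : ℝ)
    set w : Fin 3 → ℝ := ![((n:ℝ) - A - B)/((n:ℝ)-1), ((n:ℝ)*A+B-(n:ℝ))/((n:ℝ)*((n:ℝ)-1)), B/(n:ℝ)]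
    set z : Fin 3 → ℝ × ℝ := ![(1,0),((n:ℝ),0),(0,(n:ℝ))]
    have hw0 : ∀ i ∈ Finset.univ, 0 ≤ w i := by
      intro i _
      fin_cases i
      · exact div_nonneg (by simp [w]; linarith) (le_of_lt hN1)
      · exact div_nonneg (by linarith) (by positivity)
      · exact div_nonneg hBR (le_of_lt hN0)
    have hw1 : ∑ i ∈ Finset.univ, w i = 1 := by
      simp only [w, Fin.sum_univ_three, Matrix.cons_val_zero, Matrix.cons_val_one,
        Matrix.head_cons, Matrix.cons_val_two, Matrix.tail_cons]
      field_simp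
      ring
    have hz : ∀ i ∈ Finset.univ, z i ∈ convexHull ℝ S := by
      intro i _
      apply subset_convexHull
      fin_cases i <;> simp [z, S]
    have hmem := (convex_convexHull ℝ S).sum_mem hw0 hw1 hz
    have heq : ∑ i ∈ Finset.univ, w i • z i = (A, B) := by
      simp only [w, z, Fin.sum_univ_three, Matrix.cons_val_zero, Matrix.cons_val_one,
        Matrix.head_cons, Matrix.cons_val_two, Matrix.tail_cons, Prod.smul_mk, smul_eq_mul,
        Prod.mk_add_mk, Prod.mk.injEq]
      constructor
      · field_simp
        ring
      · field_simp
        ring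
    rwa [heq] at hmem
  · apply convexHull_min _ (convex_convexHull ℝ _)
    intro p hp
    apply subset_convexHull
    have h10 : (1:ZMod 2) ≠ 0 := by decide
    rcases hp with rfl | rfl | rfl
    · exact ⟨sd 1 0, by rw [Finset.mem_coe, mem_support_iff, halpha, h7 (by omega)]; exact h10,
        by simp [sd_apply0, sd_apply1]⟩
    · exact ⟨sd n 0, by rw [Finset.mem_coe, mem_support_iff, halpha, h5]; exact h10,
        by simp [sd_apply0, sd_apply1]⟩
    · exact ⟨sd 0 n, by rw [Finset.mem_coe, mem_support_iff, halpha, h6]; exact h10,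
        by simp [sd_apply0, sd_apply1]⟩
end

section
/- Let d ≥ 2 and let ι : ℤ² → ℤ^{d−2} be a ℤ-linear map, and define i : ℝ² → ℝ^d by i(x,y) = (x, y, ι(x,y)) (extending ι ℝ-linearly). For n ≥ 1 let P_n ⊂ ℝ^d be the convex hull of {i(1,0), i(n,0), i(0,n)}. Then for any two distinct integers n, m ≥ 1 there is no φ ∈ GL(d,ℤ) such that φ maps the set of lattice points ℤ^d ∩ P_n bijectively onto the set of lattice points ℤ^d ∩ P_m. -/
/-- Embedding `ℤ² → ℤ^d` given by `v ↦ (v, ι v)`: the first two coordinates are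
those of `v`, and the remaining `d − 2` coordinates are those of `ι v`. -/
def stmtEmb (d : ℕ) (ι : (Fin 2 → ℤ) →ₗ[ℤ] (Fin (d - 2) → ℤ)) :
    (Fin 2 → ℤ) → (Fin d → ℤ) := fun v i =>
  if h : (i : ℕ) < 2 then v ⟨(i : ℕ), h⟩
  else ι v ⟨(i : ℕ) - 2, by have := i.isLt; omega⟩

/-- The lattice points of the polytope `conv{i(1,0), i(n,0), i(0,n)} ⊂ ℝ^d`. -/
def stmtLatticePts (d : ℕ) (ι : (Fin 2 → ℤ) →ₗ[ℤ] (Fin (d - 2) → ℤ)) (n : ℕ) :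
    Set (Fin d → ℤ) :=
  {p : Fin d → ℤ | (fun k => (p k : ℝ)) ∈
    convexHull ℝ {(fun k => ((stmtEmb d ι ![1, 0] k : ℤ) : ℝ)),
                  (fun k => ((stmtEmb d ι ![(n : ℤ), 0] k : ℤ) : ℝ)),
                  (fun k => ((stmtEmb d ι ![0, (n : ℤ)] k : ℤ) : ℝ))}}

section aux
variable {d : ℕ} (ι : (Fin 2 → ℤ) →ₗ[ℤ] (Fin (d - 2) → ℤ))

lemma vdecomp (v : Fin 2 → ℤ) : v = v 0 • ![(1:ℤ),0] + v 1 • ![0,1] := by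
  funext i; fin_cases i <;> simp

lemma iota_apply (v : Fin 2 → ℤ) (j : Fin (d-2)) :
    ι v j = v 0 * ι ![1,0] j + v 1 * ι ![0,1] j := by
  conv_lhs => rw [vdecomp v, map_add, map_smul, map_smul]
  rfl

lemma emb_lt (v : Fin 2 → ℤ) (k : Fin d) (h : (k:ℕ) < 2) :
    stmtEmb d ι v k = v ⟨(k:ℕ), h⟩ := by simp [stmtEmb, h]

lemma emb_ge (v : Fin 2 → ℤ) (k : Fin d) (h : ¬ (k:ℕ) < 2) :
    stmtEmb d ι v k = ι v ⟨(k:ℕ) - 2, by have := k.isLt; omega⟩ := by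
  simp [stmtEmb, h]

lemma emb_zero (hd : 2 ≤ d) (v : Fin 2 → ℤ) : stmtEmb d ι v ⟨0, by omega⟩ = v 0 := by
  rw [emb_lt ι v _ (by norm_num)]; rfl

lemma emb_one (hd : 2 ≤ d) (v : Fin 2 → ℤ) : stmtEmb d ι v ⟨1, by omega⟩ = v 1 := by
  rw [emb_lt ι v _ (by norm_num)]; rfl

lemma emb_inj (hd : 2 ≤ d) : Function.Injective (stmtEmb d ι) := by
  intro u v h
  funext i
  fin_cases i
  · show u 0 = v 0
    rw [← emb_zero ι hd u, ← emb_zero ι hd v, h]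
  · show u 1 = v 1
    rw [← emb_one ι hd u, ← emb_one ι hd v, h]

def Sset (n : ℕ) : Set (Fin 2 → ℤ) :=
  {v | 0 ≤ v 1 ∧ v 1 ≤ (n:ℤ) ∧ v 0 + v 1 ≤ (n:ℤ) ∧ (n:ℤ) ≤ (n:ℤ) * v 0 + v 1}

/-- membership in the hull from a convex combination of planar data. -/
lemma combo_mem (hd : 2 ≤ d) (n : ℕ) (v : Fin 2 → ℤ) (a b c : ℝ)
    (ha : 0 ≤ a) (hb : 0 ≤ b) (hc : 0 ≤ c) (habc : a + b + c = 1)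
    (h0 : (v 0 : ℝ) = a * 1 + b * n) (h1 : (v 1 : ℝ) = c * n) :
    (fun k => ((stmtEmb d ι v k : ℤ) : ℝ)) ∈
      convexHull ℝ {(fun k => ((stmtEmb d ι ![1, 0] k : ℤ) : ℝ)),
                  (fun k => ((stmtEmb d ι ![(n : ℤ), 0] k : ℤ) : ℝ)),
                  (fun k => ((stmtEmb d ι ![0, (n : ℤ)] k : ℤ) : ℝ))} := by
  set A : Fin d → ℝ := fun k => ((stmtEmb d ι ![1, 0] k : ℤ) : ℝ) with hA
  set B : Fin d → ℝ := fun k => ((stmtEmb d ι ![(n : ℤ), 0] k : ℤ) : ℝ) with hB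
  set C : Fin d → ℝ := fun k => ((stmtEmb d ι ![0, (n : ℤ)] k : ℤ) : ℝ) with hC
  have key : (fun k => ((stmtEmb d ι v k : ℤ) : ℝ)) =
      Finset.univ.centerMass ![a,b,c] ![A,B,C] := by
    rw [Finset.centerMass_eq_of_sum_1]
    · rw [Fin.sum_univ_three]
      simp only [Matrix.cons_val_zero, Matrix.cons_val_one, Matrix.head_cons,
        Matrix.cons_val_two, Matrix.tail_cons]
      funext k
      simp only [Pi.add_apply, Pi.smul_apply, smul_eq_mul, hA, hB, hC]
      by_cases hk : (k:ℕ) < 2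
      · rcases (show (k:ℕ) = 0 ∨ (k:ℕ) = 1 by omega) with h | h
        · rw [emb_lt ι v k hk, emb_lt ι _ k hk, emb_lt ι _ k hk, emb_lt ι _ k hk]
          have : (⟨(k:ℕ), hk⟩ : Fin 2) = ⟨0, by omega⟩ := by simp [h]
          rw [this]
          show (v 0 : ℝ) = a * ((1:ℤ):ℝ) + b * (((n:ℤ)):ℝ) + c * ((0:ℤ):ℝ)
          push_cast
          linarith [h0]
        · rw [emb_lt ι v k hk, emb_lt ι _ k hk, emb_lt ι _ k hk, emb_lt ι _ k hk]
          have : (⟨(k:ℕ), hk⟩ : Fin 2) = ⟨1, by omega⟩ := by simp [h]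
          rw [this]
          show (v 1 : ℝ) = a * ((0:ℤ):ℝ) + b * ((0:ℤ):ℝ) + c * (((n:ℤ)):ℝ)
          push_cast
          linarith [h1]
      · rw [emb_ge ι v k hk, emb_ge ι _ k hk, emb_ge ι _ k hk, emb_ge ι _ k hk]
        set j : Fin (d-2) := ⟨(k:ℕ) - 2, by have := k.isLt; omega⟩
        rw [iota_apply ι v j, iota_apply ι ![(n:ℤ),0] j, iota_apply ι ![0,(n:ℤ)] j]
        simp only [Matrix.cons_val_zero, Matrix.cons_val_one, Matrix.head_cons]
        push_cast
        linear_combination h0 * ((ι ![1,0] j : ℤ):ℝ) + h1 * ((ι ![0,1] j : ℤ):ℝ)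
    · rw [Fin.sum_univ_three]
      simpa using habc
  rw [key]
  refine Finset.centerMass_mem_convexHull _ ?_ ?_ ?_
  · intro i _
    fin_cases i <;> simpa
  · rw [Fin.sum_univ_three]
    simp only [Matrix.cons_val_zero, Matrix.cons_val_one, Matrix.head_cons,
      Matrix.cons_val_two, Matrix.tail_cons]
    linarith
  · intro i _
    fin_cases i <;> simp

end aux

section aux2
variable {d : ℕ} (ι : (Fin 2 → ℤ) →ₗ[ℤ] (Fin (d - 2) → ℤ))

lemma emb_coord0 (v : Fin 2 → ℤ) (k : Fin d) (h : (k:ℕ) = 0) :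
    stmtEmb d ι v k = v 0 := by
  rw [emb_lt ι v k (by omega)]
  congr 1
  ext
  simp [h]

lemma emb_coord1 (v : Fin 2 → ℤ) (k : Fin d) (h : (k:ℕ) = 1) :
    stmtEmb d ι v k = v 1 := by
  rw [emb_lt ι v k (by omega)]
  congr 1
  ext
  simp [h]

lemma emb_high (w : Fin 2 → ℤ) (k : Fin d) (hk : ¬ (k:ℕ) < 2) :
    ((stmtEmb d ι w k : ℤ) : ℝ)
      = ((w 0 : ℤ):ℝ) * ((ι ![1,0] ⟨(k:ℕ)-2, Nat.sub_lt_sub_right (Nat.le_of_not_lt hk) k.isLt⟩ : ℤ):ℝ)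
      + ((w 1 : ℤ):ℝ) * ((ι ![0,1] ⟨(k:ℕ)-2, Nat.sub_lt_sub_right (Nat.le_of_not_lt hk) k.isLt⟩ : ℤ):ℝ) := by
  rw [emb_ge ι w k hk, iota_apply ι w]
  push_cast
  ring

lemma latticePts_eq (hd : 2 ≤ d) (n : ℕ) (hn : 1 ≤ n) :
    stmtLatticePts d ι n = stmtEmb d ι '' Sset n := by
  have hd0 : 0 < d := by omega
  have hd1 : 1 < d := by omega
  set i0 : Fin d := ⟨0, hd0⟩ with hi0def
  set i1 : Fin d := ⟨1, hd1⟩ with hi1def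
  have hi0 : (i0 : ℕ) = 0 := rfl
  have hi1 : (i1 : ℕ) = 1 := rfl
  ext p
  constructor
  · intro hp
    set K : Set (Fin d → ℝ) := {y | 0 ≤ y i1 ∧ y i1 ≤ (n:ℝ) ∧ y i0 + y i1 ≤ (n:ℝ) ∧
      (n:ℝ) ≤ (n:ℝ) * y i0 + y i1 ∧ ∀ k : Fin d, ∀ hk : ¬((k:ℕ) < 2),
        y k = y i0 * ((ι ![1,0] ⟨(k:ℕ)-2, Nat.sub_lt_sub_right (Nat.le_of_not_lt hk) k.isLt⟩ : ℤ):ℝ)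
            + y i1 * ((ι ![0,1] ⟨(k:ℕ)-2, Nat.sub_lt_sub_right (Nat.le_of_not_lt hk) k.isLt⟩ : ℤ):ℝ)} with hKdef
    have hKc : Convex ℝ K := by
      rintro x ⟨hx1, hx2, hx3, hx4, hx5⟩ y ⟨hy1, hy2, hy3, hy4, hy5⟩ a b ha hb hab
      have hmul : a * (n:ℝ) + b * n = n := by
        rw [← add_mul, hab, one_mul]
      refine ⟨?_, ?_, ?_, ?_, ?_⟩
      · simp only [Pi.add_apply, Pi.smul_apply, smul_eq_mul]
        have := mul_nonneg ha hx1
        have := mul_nonneg hb hy1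
        linarith
      · simp only [Pi.add_apply, Pi.smul_apply, smul_eq_mul]
        have := mul_le_mul_of_nonneg_left hx2 ha
        have := mul_le_mul_of_nonneg_left hy2 hb
        linarith
      · simp only [Pi.add_apply, Pi.smul_apply, smul_eq_mul]
        have := mul_le_mul_of_nonneg_left hx3 ha
        have := mul_le_mul_of_nonneg_left hy3 hb
        linarith
      · simp only [Pi.add_apply, Pi.smul_apply, smul_eq_mul]
        have h1 := mul_le_mul_of_nonneg_left hx4 ha
        have h2 := mul_le_mul_of_nonneg_left hy4 hb
        have e : (n:ℝ)*(a*x i0 + b*y i0) + (a*x i1 + b*y i1)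
            = a*((n:ℝ)*x i0 + x i1) + b*((n:ℝ)*y i0 + y i1) := by ring
        linarith
      · intro k hk
        simp only [Pi.add_apply, Pi.smul_apply, smul_eq_mul]
        linear_combination a * (hx5 k hk) + b * (hy5 k hk)
    have hsub : {(fun k => ((stmtEmb d ι ![1, 0] k : ℤ) : ℝ)),
                  (fun k => ((stmtEmb d ι ![(n : ℤ), 0] k : ℤ) : ℝ)),
                  (fun k => ((stmtEmb d ι ![0, (n : ℤ)] k : ℤ) : ℝ))} ⊆ K := by
      rintro q hq
      simp only [Set.mem_insert_iff, Set.mem_singleton_iff] at hq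
      have hn' : (1:ℝ) ≤ (n:ℝ) := by exact_mod_cast hn
      have five : ∀ w : Fin 2 → ℤ, ∀ k : Fin d, ∀ hk : ¬((k:ℕ) < 2),
          ((stmtEmb d ι w k : ℤ):ℝ) = ((stmtEmb d ι w i0 : ℤ):ℝ) *
            ((ι ![1,0] ⟨(k:ℕ)-2, Nat.sub_lt_sub_right (Nat.le_of_not_lt hk) k.isLt⟩ : ℤ):ℝ)
          + ((stmtEmb d ι w i1 : ℤ):ℝ) *
            ((ι ![0,1] ⟨(k:ℕ)-2, Nat.sub_lt_sub_right (Nat.le_of_not_lt hk) k.isLt⟩ : ℤ):ℝ) := by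
        intro w k hk
        rw [emb_coord0 ι _ i0 hi0, emb_coord1 ι _ i1 hi1]
        exact emb_high ι w k hk
      rcases hq with rfl | rfl | rfl
      · have e0 : ((stmtEmb d ι ![1,0] i0 : ℤ):ℝ) = 1 := by
          rw [emb_coord0 ι _ i0 hi0]; norm_num
        have e1 : ((stmtEmb d ι ![1,0] i1 : ℤ):ℝ) = 0 := by
          rw [emb_coord1 ι _ i1 hi1]; norm_num
        refine ⟨?_, ?_, ?_, ?_, fun k hk => five _ k hk⟩ <;>
          simp only [e0, e1] <;> linarith
      · have e0 : ((stmtEmb d ι ![(n:ℤ),0] i0 : ℤ):ℝ) = (n:ℝ) := by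
          rw [emb_coord0 ι _ i0 hi0]; norm_num
        have e1 : ((stmtEmb d ι ![(n:ℤ),0] i1 : ℤ):ℝ) = 0 := by
          rw [emb_coord1 ι _ i1 hi1]; norm_num
        refine ⟨?_, ?_, ?_, ?_, fun k hk => five _ k hk⟩ <;>
          simp only [e0, e1] <;> nlinarith
      · have e0 : ((stmtEmb d ι ![0,(n:ℤ)] i0 : ℤ):ℝ) = 0 := by
          rw [emb_coord0 ι _ i0 hi0]; norm_num
        have e1 : ((stmtEmb d ι ![0,(n:ℤ)] i1 : ℤ):ℝ) = (n:ℝ) := by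
          rw [emb_coord1 ι _ i1 hi1]; norm_num
        refine ⟨?_, ?_, ?_, ?_, fun k hk => five _ k hk⟩ <;>
          simp only [e0, e1] <;> linarith
    have hp' := convexHull_min hsub hKc hp
    obtain ⟨h1, h2, h3, h4, h5⟩ := hp'
    refine ⟨![p i0, p i1], ⟨?_, ?_, ?_, ?_⟩, ?_⟩
    · show (0:ℤ) ≤ p i1
      have h1' : (0:ℝ) ≤ ((p i1 : ℤ):ℝ) := h1
      exact_mod_cast h1'
    · show (p i1 : ℤ) ≤ (n:ℤ)
      have h2' : ((p i1 : ℤ):ℝ) ≤ (n:ℝ) := h2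
      exact_mod_cast h2'
    · show (p i0 : ℤ) + p i1 ≤ (n:ℤ)
      have h3' : ((p i0 : ℤ):ℝ) + ((p i1 : ℤ):ℝ) ≤ (n:ℝ) := h3
      exact_mod_cast h3'
    · show (n:ℤ) ≤ (n:ℤ) * p i0 + p i1
      have h4' : (n:ℝ) ≤ (n:ℝ) * ((p i0:ℤ):ℝ) + ((p i1:ℤ):ℝ) := h4
      exact_mod_cast h4'
    · funext k
      by_cases hk : (k:ℕ) < 2
      · rcases (show (k:ℕ) = 0 ∨ (k:ℕ) = 1 by omega) with h | h
        · rw [emb_coord0 ι _ k h]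
          show p i0 = p k
          congr 1
          ext
          simp [h, hi0]
        · rw [emb_coord1 ι _ k h]
          show p i1 = p k
          congr 1
          ext
          simp [h, hi1]
      · rw [emb_ge ι _ k hk]
        have h5' : ((p k : ℤ):ℝ) = ((p i0 : ℤ):ℝ) * ((ι ![1,0] ⟨(k:ℕ)-2, Nat.sub_lt_sub_right (Nat.le_of_not_lt hk) k.isLt⟩ : ℤ):ℝ)
            + ((p i1 : ℤ):ℝ) * ((ι ![0,1] ⟨(k:ℕ)-2, Nat.sub_lt_sub_right (Nat.le_of_not_lt hk) k.isLt⟩ : ℤ):ℝ) := h5 k hk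
        rw [iota_apply ι]
        simp only [Matrix.cons_val_zero, Matrix.cons_val_one, Matrix.head_cons]
        exact_mod_cast h5'.symm
  · rintro ⟨v, ⟨h1, h2, h3, h4⟩, rfl⟩
    by_cases hn1 : n = 1
    · subst hn1
      refine combo_mem ι hd 1 v (v 0 : ℝ) 0 (v 1 : ℝ) ?_ le_rfl ?_ ?_ ?_ ?_
      · have : (0:ℤ) ≤ v 0 := by omega
        exact_mod_cast this
      · exact_mod_cast h1
      · have hsum : v 0 + v 1 = 1 := by omega
        have : ((v 0:ℤ):ℝ) + ((v 1:ℤ):ℝ) = 1 := by exact_mod_cast congrArg (Int.cast : ℤ → ℝ) hsum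
        linarith
      · push_cast
        ring
      · push_cast
        ring
    · have hn2 : 2 ≤ n := by omega
      have hnR : (0:ℝ) < (n:ℝ) := by exact_mod_cast Nat.pos_of_ne_zero (by omega)
      have hnR1 : (0:ℝ) < (n:ℝ) - 1 := by
        have : (2:ℝ) ≤ (n:ℝ) := by exact_mod_cast hn2
        linarith
      refine combo_mem ι hd n v (((n:ℝ) - v 0 - v 1)/((n:ℝ)-1))
        (((n:ℝ) * v 0 + v 1 - n)/((n:ℝ)*((n:ℝ)-1))) ((v 1 : ℝ)/(n:ℝ)) ?_ ?_ ?_ ?_ ?_ ?_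
      · apply div_nonneg _ (le_of_lt hnR1)
        have : ((v 0 : ℝ)) + v 1 ≤ (n:ℝ) := by exact_mod_cast h3
        linarith
      · apply div_nonneg _ (le_of_lt (mul_pos hnR hnR1))
        have : (n:ℝ) ≤ (n:ℝ) * v 0 + v 1 := by exact_mod_cast h4
        linarith
      · apply div_nonneg _ (le_of_lt hnR)
        exact_mod_cast h1
      · field_simp
        ring
      · field_simp
        ring
      · field_simp
end aux2


section aux3
variable {d : ℕ} (ι : (Fin 2 → ℤ) →ₗ[ℤ] (Fin (d - 2) → ℤ))

lemma Sset_x0_nonneg {n : ℕ} (hn : 1 ≤ n) {v : Fin 2 → ℤ} (hv : v ∈ Sset n) :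
    0 ≤ v 0 := by
  obtain ⟨h1, h2, h3, h4⟩ := hv
  have hn' : (1:ℤ) ≤ (n:ℤ) := by exact_mod_cast hn
  nlinarith

lemma Sset_finite (n : ℕ) (hn : 1 ≤ n) : (Sset n).Finite := by
  apply Set.Finite.subset (Set.finite_Icc (fun _ : Fin 2 => (0:ℤ)) (fun _ => (n:ℤ)))
  intro v hv
  obtain ⟨h1, h2, h3, h4⟩ := hv
  have h0 := Sset_x0_nonneg hn ⟨h1, h2, h3, h4⟩
  constructor <;> intro i <;> fin_cases i <;> simp <;> omega

lemma Sset_of_x0_eq_zero {n : ℕ} (hn : 1 ≤ n) {v : Fin 2 → ℤ} (hv : v ∈ Sset n)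
    (h0 : v 0 = 0) : v = ![0, (n:ℤ)] := by
  obtain ⟨h1, h2, h3, h4⟩ := hv
  rw [h0] at h4
  funext i
  fin_cases i <;> simp [h0] <;> omega

lemma vert_mem_Sset (m : ℕ) (hm : 1 ≤ m) : ![0, (m:ℤ)] ∈ Sset m := by
  have hm' : (1:ℤ) ≤ (m:ℤ) := by exact_mod_cast hm
  refine ⟨by simp, by simp, by simp, by simp⟩

lemma horiz_mem_Sset (m : ℕ) (hm : 1 ≤ m) : ![(m:ℤ), 0] ∈ Sset m := by
  have hm' : (1:ℤ) ≤ (m:ℤ) := by exact_mod_cast hm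
  refine ⟨by simp, by simp, by simp, by simp; nlinarith⟩

lemma Sset_card_lt (n m : ℕ) (hn : 1 ≤ n) (hnm : n < m) :
    (Sset n).ncard < (Sset m).ncard := by
  have hm : 1 ≤ m := by omega
  have hn' : (1:ℤ) ≤ (n:ℤ) := by exact_mod_cast hn
  have hm' : (1:ℤ) ≤ (m:ℤ) := by exact_mod_cast hm
  have hnm' : (n:ℤ) < (m:ℤ) := by exact_mod_cast hnm
  set g : (Fin 2 → ℤ) → (Fin 2 → ℤ) := fun v => if v 0 = 0 then ![0, (m:ℤ)] else v
    with hg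
  have hmaps : Set.MapsTo g (Sset n) (Sset m) := by
    intro v hv
    by_cases h0 : v 0 = 0
    · simp only [hg, h0, if_pos rfl]
      exact vert_mem_Sset m hm
    · have hpos : 1 ≤ v 0 := by
        have := Sset_x0_nonneg hn hv
        omega
      obtain ⟨h1, h2, h3, h4⟩ := hv
      simp only [hg, if_neg h0]
      refine ⟨h1, by omega, by omega, ?_⟩
      nlinarith
  have hinj : Set.InjOn g (Sset n) := by
    intro u hu v hv huv
    by_cases hu0 : u 0 = 0 <;> by_cases hv0 : v 0 = 0
    · rw [Sset_of_x0_eq_zero hn hu hu0, Sset_of_x0_eq_zero hn hv hv0]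
    · exfalso
      simp only [hg, if_pos hu0, if_neg hv0] at huv
      apply hv0
      rw [← huv]
      simp
    · exfalso
      simp only [hg, if_neg hu0, if_pos hv0] at huv
      apply hu0
      rw [huv]
      simp
    · simpa [hg, if_neg hu0, if_neg hv0] using huv
  have hss : g '' Sset n ⊂ Sset m := by
    constructor
    · exact Set.image_subset_iff.mpr fun v hv => hmaps hv
    · intro hsub
      have hmem : ![(m:ℤ), 0] ∈ g '' Sset n := hsub (horiz_mem_Sset m hm)
      obtain ⟨v, hv, hgv⟩ := hmem
      by_cases h0 : v 0 = 0
      · simp only [hg, if_pos h0] at hgv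
        have := congrFun hgv 0
        simp at this
        omega
      · simp only [hg, if_neg h0] at hgv
        obtain ⟨h1, h2, h3, h4⟩ := hv
        rw [hgv] at h3 h1
        simp at h3 h1
        omega
  calc (Sset n).ncard = (g '' Sset n).ncard := (Set.ncard_image_of_injOn hinj).symm
    _ < (Sset m).ncard := Set.ncard_lt_ncard hss (Sset_finite m hm)

end aux3


/-- For `d ≥ 2`, a `ℤ`-linear `ι : ℤ² → ℤ^{d−2}` and the induced
embedding `i(x,y) = (x, y, ι(x,y))`, let `P_n` be the convex hull of
`{i(1,0), i(n,0), i(0,n)}` in `ℝ^d`.  For distinct `n, m ≥ 1` no `φ ∈ GL(d,ℤ)`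
maps the lattice points of `P_n` bijectively onto the lattice points of `P_m`. -/
theorem stmt_6 (d : ℕ) (hd : 2 ≤ d) (ι : (Fin 2 → ℤ) →ₗ[ℤ] (Fin (d - 2) → ℤ))
    (n m : ℕ) (hn : 1 ≤ n) (hm : 1 ≤ m) (hnm : n ≠ m) :
    ¬ ∃ φ : Matrix.GeneralLinearGroup (Fin d) ℤ,
        Set.BijOn (fun p => (φ : Matrix (Fin d) (Fin d) ℤ).mulVec p)
          (stmtLatticePts d ι n) (stmtLatticePts d ι m) := by
  rintro ⟨φ, hφ⟩
  have e1 : (stmtLatticePts d ι n).ncard = (Sset n).ncard := by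
    rw [latticePts_eq ι hd n hn]
    exact Set.ncard_image_of_injective _ (emb_inj ι hd)
  have e2 : (stmtLatticePts d ι m).ncard = (Sset m).ncard := by
    rw [latticePts_eq ι hd m hm]
    exact Set.ncard_image_of_injective _ (emb_inj ι hd)
  have e3 : (stmtLatticePts d ι n).ncard = (stmtLatticePts d ι m).ncard := by
    rw [← hφ.image_eq]
    exact (Set.ncard_image_of_injOn hφ.injOn).symm
  rw [e1, e2] at e3
  rcases lt_trichotomy n m with h | h | h
  · exact absurd e3 (Nat.ne_of_lt (Sset_card_lt n m hn h))
  · exact hnm h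
  · exact absurd e3.symm (Nat.ne_of_lt (Sset_card_lt m n hm h))
end

section
/- Let M₂ be the 2×2 matrix over A = 𝔽₂[x^{±1}, y^{±1}, z^{±1}] with first row (z⁻² + y·x⁻¹·z⁻¹, x⁻¹·z⁻¹) and second row (y, 1), and let τ : 𝔽₂[X,Y] → A be the 𝔽₂-algebra homomorphism with τ(X) = y·x⁻¹·z⁻¹ and τ(Y) = z⁻². Then for every n ≥ 1, the (1,1) entry of M₂^n equals τ(α_n), where α_n is the (1,1) entry of the n-th power of the 2×2 matrix over 𝔽₂[X,Y] with rows (X+Y, 1) and (X, 1). -/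
open MvPolynomial

/-- The Laurent polynomial ring `𝔽₂[x^{±1}, y^{±1}, z^{±1}]`, realized as the group
algebra of `ℤ³` over `𝔽₂`. -/
abbrev LaurentA : Type := AddMonoidAlgebra (ZMod 2) (Fin 3 → ℤ)

/-- The monomial `x^a y^b z^c` corresponding to the exponent vector `(a,b,c) ∈ ℤ³`. -/
noncomputable def lmon (v : Fin 3 → ℤ) : LaurentA := AddMonoidAlgebra.single v 1

/-- The matrix `M₂` with rows `(z⁻² + y·x⁻¹·z⁻¹, x⁻¹·z⁻¹)` and `(y, 1)`. -/
noncomputable def stmtM2 : Matrix (Fin 2) (Fin 2) LaurentA :=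
  !![lmon ![0, 0, -2] + lmon ![-1, 1, -1], lmon ![-1, 0, -1]; lmon ![0, 1, 0], 1]

/-- The `𝔽₂`-algebra homomorphism `τ : 𝔽₂[X,Y] → A` with `τ(X) = y·x⁻¹·z⁻¹`,
`τ(Y) = z⁻²`. -/
noncomputable def stmtTau : MvPolynomial (Fin 2) (ZMod 2) →ₐ[ZMod 2] LaurentA :=
  aeval ![lmon ![-1, 1, -1], lmon ![0, 0, -2]]

lemma lmon_mul (v w : Fin 3 → ℤ) : lmon v * lmon w = lmon (v + w) := by
  simp [lmon, AddMonoidAlgebra.single_mul_single]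

lemma two_eq_zero_A : (2 : LaurentA) = 0 := by
  have h : algebraMap (ZMod 2) LaurentA (1 + 1) = 0 := by
    rw [show (1 + 1 : ZMod 2) = 0 by decide, map_zero]
  rw [show (2 : LaurentA) = 1 + 1 from by norm_num]
  rwa [map_add, map_one] at h

lemma two_eq_zero_P : (2 : MvPolynomial (Fin 2) (ZMod 2)) = 0 := by
  have h : (C (1 + 1 : ZMod 2) : MvPolynomial (Fin 2) (ZMod 2)) = 0 := by
    rw [show (1 + 1 : ZMod 2) = 0 by decide, map_zero]
  rw [show (2 : MvPolynomial (Fin 2) (ZMod 2)) = 1 + 1 from by norm_num]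
  simpa using h

lemma pow_rec {R : Type*} [CommRing R] (A : Matrix (Fin 2) (Fin 2) R) (t d : R)
    (h : A ^ 2 = t • A + d • 1) (n : ℕ) :
    A ^ (n + 2) = t • A ^ (n + 1) + d • A ^ n := by
  rw [pow_add, h, Matrix.mul_add, Matrix.mul_smul, Matrix.mul_smul, mul_one, ← pow_succ]

noncomputable def T2 : LaurentA := lmon ![0, 0, -2] + lmon ![-1, 1, -1] + 1
noncomputable def D2 : LaurentA := lmon ![0, 0, -2]
noncomputable def TP : MvPolynomial (Fin 2) (ZMod 2) := X 0 + X 1 + 1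
noncomputable def DP : MvPolynomial (Fin 2) (ZMod 2) := X 1

lemma hM2 : stmtM2 ^ 2 = T2 • stmtM2 + D2 • 1 := by
  have hbc : lmon ![-1, 0, -1] * lmon ![0, 1, 0] = lmon ![-1, 1, -1] := by
    rw [lmon_mul]; congr 1; ext i; fin_cases i <;> rfl
  have hcb : lmon ![0, 1, 0] * lmon ![-1, 0, -1] = lmon ![-1, 1, -1] := by
    rw [lmon_mul]; congr 1; ext i; fin_cases i <;> rfl
  have h2 : (2 : LaurentA) = 0 := two_eq_zero_A
  refine Matrix.ext fun i j => ?_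
  fin_cases i <;> fin_cases j <;>
    simp [pow_two, Matrix.mul_apply, Fin.sum_univ_two, stmtM2, T2, D2, Matrix.one_apply]
  · linear_combination hbc - (lmon ![0,0,-2]) * h2
  · ring
  · ring
  · linear_combination hcb - (lmon ![0,0,-2]) * h2

lemma hMP : stmtM ^ 2 = TP • stmtM + DP • 1 := by
  have h2 : (2 : MvPolynomial (Fin 2) (ZMod 2)) = 0 := two_eq_zero_P
  refine Matrix.ext fun i j => ?_
  fin_cases i <;> fin_cases j <;>
    simp [pow_two, Matrix.mul_apply, Fin.sum_univ_two, stmtM, TP, DP, Matrix.one_apply]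
  · linear_combination -(X 1 : MvPolynomial (Fin 2) (ZMod 2)) * h2
  · ring
  · linear_combination -(X 1 : MvPolynomial (Fin 2) (ZMod 2)) * h2

lemma tau_T : stmtTau TP = T2 := by
  simp [stmtTau, TP, T2]; ring

lemma tau_D : stmtTau DP = D2 := by
  simp [stmtTau, DP, D2]

/-- For every `n ≥ 1`, the `(1,1)` entry of `M₂ ^ n` equals
`τ(α_n)`. -/
theorem stmt_9 (n : ℕ) (hn : 1 ≤ n) :
    (stmtM2 ^ n) 0 0 = stmtTau (stmtAlpha n) := by
  have base0 : stmtM2 0 0 = stmtTau (stmtM 0 0) := by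
    simp [stmtM2, stmtM, stmtTau, add_comm]
  have base1 : (stmtM2 ^ 1) 0 0 = stmtTau ((stmtM ^ 1) 0 0) := by
    simpa using base0
  have key : ∀ m : ℕ, (stmtM2 ^ (m+1)) 0 0 = stmtTau ((stmtM ^ (m+1)) 0 0) ∧
      (stmtM2 ^ (m+2)) 0 0 = stmtTau ((stmtM ^ (m+2)) 0 0) := by
    intro m
    induction m with
    | zero =>
      refine ⟨base1, ?_⟩
      rw [pow_rec stmtM2 T2 D2 hM2 0, pow_rec stmtM TP DP hMP 0]
      simp only [Matrix.add_apply, Matrix.smul_apply, smul_eq_mul, map_add, map_mul,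
        tau_T, tau_D, pow_zero, zero_add, pow_one, Matrix.one_apply_eq, map_one]
      rw [base0]
    | succ k ih =>
      refine ⟨ih.2, ?_⟩
      have e2 := pow_rec stmtM2 T2 D2 hM2 (k+1)
      have eP := pow_rec stmtM TP DP hMP (k+1)
      rw [e2, eP]
      simp only [Matrix.add_apply, Matrix.smul_apply, smul_eq_mul, map_add, map_mul,
        tau_T, tau_D, ih.1, ih.2]
  obtain ⟨m, rfl⟩ := Nat.exists_eq_add_of_le hn
  have := (key m).1
  rw [stmtAlpha]
  simpa [add_comm] using this
end

section
/- For every n ≥ 1, the number of lattice points p ∈ ℤ² lying in the convex hull in ℝ² of the three points (1,0), (n,0) and (0,2n) equals n² + 1. -/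
lemma hull_eq (n : ℕ) (hn : 1 ≤ n) :
    convexHull ℝ {((1 : ℝ), (0 : ℝ)), ((n : ℝ), (0 : ℝ)), ((0 : ℝ), (2 * n : ℝ))} =
      {q : ℝ × ℝ | 0 ≤ q.2 ∧ q.2 ≤ 2*n ∧ 2*q.1 + q.2 ≤ 2*n ∧ 2*n ≤ 2*n*q.1 + q.2} := by
  have hn' : (1:ℝ) ≤ n := by exact_mod_cast hn
  have h2n : (0:ℝ) < 2*n := by linarith
  apply le_antisymm
  · apply convexHull_min
    · intro v hv
      simp only [Set.mem_insert_iff, Set.mem_singleton_iff] at hv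
      rcases hv with rfl | rfl | rfl <;>
        exact ⟨by simp; try nlinarith, by simp; try nlinarith, by simp; try nlinarith, by simp; try nlinarith⟩
    · intro p hp q hq a b ha hb hab
      simp only [Set.mem_setOf_eq, Prod.smul_fst, Prod.smul_snd, Prod.fst_add,
        Prod.snd_add, smul_eq_mul] at *
      obtain ⟨h1,h2,h3,h4⟩ := hp
      obtain ⟨h1',h2',h3',h4'⟩ := hq
      refine ⟨by nlinarith, by nlinarith, by nlinarith, by nlinarith⟩
  · intro q hq
    obtain ⟨h1, h2, h3, h4⟩ := hq
    set t : ℝ := q.2 / (2*n) with ht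
    have ht0 : 0 ≤ t := by positivity
    have ht1 : t ≤ 1 := by rw [ht, div_le_one h2n]; linarith
    have h2nt : 2*n*t = q.2 := by rw [ht]; field_simp
    have hconv := convex_convexHull ℝ
      ({((1 : ℝ), (0 : ℝ)), ((n : ℝ), (0 : ℝ)), ((0 : ℝ), (2 * n : ℝ))} : Set (ℝ × ℝ))
    have hv1 : ((1 : ℝ), (0 : ℝ)) ∈ convexHull ℝ
        ({((1 : ℝ), (0 : ℝ)), ((n : ℝ), (0 : ℝ)), ((0 : ℝ), (2 * n : ℝ))} : Set (ℝ × ℝ)) :=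
      subset_convexHull ℝ _ (by simp)
    have hv2 : ((n : ℝ), (0 : ℝ)) ∈ convexHull ℝ
        ({((1 : ℝ), (0 : ℝ)), ((n : ℝ), (0 : ℝ)), ((0 : ℝ), (2 * n : ℝ))} : Set (ℝ × ℝ)) :=
      subset_convexHull ℝ _ (by simp)
    have hv3 : ((0 : ℝ), (2 * n : ℝ)) ∈ convexHull ℝ
        ({((1 : ℝ), (0 : ℝ)), ((n : ℝ), (0 : ℝ)), ((0 : ℝ), (2 * n : ℝ))} : Set (ℝ × ℝ)) :=
      subset_convexHull ℝ _ (by simp)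
    have e1 : ((1 - t, q.2) : ℝ × ℝ) = (1 - t) • ((1:ℝ), (0:ℝ)) + t • ((0:ℝ), (2*n:ℝ)) := by
      apply Prod.ext <;> simp [smul_eq_mul] <;> linarith
    have e2 : ((n*(1 - t), q.2) : ℝ × ℝ) = (1 - t) • ((n:ℝ), (0:ℝ)) + t • ((0:ℝ), (2*n:ℝ)) := by
      apply Prod.ext <;> simp [smul_eq_mul] <;> nlinarith
    have hleft : ((1 - t, q.2) : ℝ × ℝ) ∈ convexHull ℝ
        ({((1 : ℝ), (0 : ℝ)), ((n : ℝ), (0 : ℝ)), ((0 : ℝ), (2 * n : ℝ))} : Set (ℝ × ℝ)) := by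
      rw [e1]; exact hconv hv1 hv3 (by linarith) ht0 (by ring)
    have hright : ((n*(1 - t), q.2) : ℝ × ℝ) ∈ convexHull ℝ
        ({((1 : ℝ), (0 : ℝ)), ((n : ℝ), (0 : ℝ)), ((0 : ℝ), (2 * n : ℝ))} : Set (ℝ × ℝ)) := by
      rw [e2]; exact hconv hv2 hv3 (by linarith) ht0 (by ring)
    have hL : 1 - t ≤ q.1 := by
      rw [← mul_le_mul_iff_right₀ h2n]
      nlinarith
    have hR : q.1 ≤ n*(1 - t) := by nlinarith
    have hseg : q.1 ∈ segment ℝ (1 - t) (n*(1-t)) := by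
      rw [segment_eq_Icc (by linarith)]
      exact ⟨hL, hR⟩
    obtain ⟨a, b, ha, hb, hab, hx⟩ := hseg
    have hq_eq : q = a • ((1 - t, q.2) : ℝ × ℝ) + b • ((n*(1 - t), q.2) : ℝ × ℝ) := by
      apply Prod.ext
      · simpa [smul_eq_mul] using hx.symm
      · simp [smul_eq_mul]; nlinarith
    rw [hq_eq]
    exact hconv hleft hright ha hb hab

lemma sum_odds (n : ℕ) : ∑ i ∈ Finset.range n, (2*i+1) = n^2 := by
  induction n with
  | zero => simp
  | succ n ih => rw [Finset.sum_range_succ, ih]; ring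

lemma card_count (n : ℕ) (hn : 1 ≤ n) :
    Set.ncard {p : ℤ × ℤ | 0 ≤ p.2 ∧ p.2 ≤ 2*(n:ℤ) ∧ 2*p.1 + p.2 ≤ 2*(n:ℤ) ∧
      2*(n:ℤ) ≤ 2*(n:ℤ)*p.1 + p.2} = n^2 + 1 := by
  set N : ℤ := (n : ℤ) with hNdef
  have hN1 : (1:ℤ) ≤ N := by rw [hNdef]; exact_mod_cast hn
  set F : Finset (ℤ × ℤ) := (Finset.Icc (0:ℤ) N).biUnion
    (fun x => (Finset.Icc (max 0 (2*N - 2*N*x)) (2*N - 2*x)).image fun y => (x, y)) with hF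
  have hset : {p : ℤ × ℤ | 0 ≤ p.2 ∧ p.2 ≤ 2*N ∧ 2*p.1 + p.2 ≤ 2*N ∧
      2*N ≤ 2*N*p.1 + p.2} = ↑F := by
    ext ⟨x, y⟩
    simp only [Set.mem_setOf_eq, hF, Finset.coe_biUnion, Finset.mem_coe,
      Finset.mem_biUnion, Finset.mem_image, Finset.mem_Icc, Set.mem_iUnion,
      Prod.mk.injEq]
    constructor
    · rintro ⟨h1, h2, h3, h4⟩
      have hx0 : 0 ≤ x := by
        have h5 : 0 ≤ 2*N*x := by linarith
        have h6 : 0 < 2*N := by linarith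
        exact nonneg_of_mul_nonneg_right (by linarith [h5]) h6
      exact ⟨x, ⟨⟨hx0, by linarith⟩, y, ⟨⟨max_le h1 (by linarith), by linarith⟩, rfl, rfl⟩⟩⟩
    · rintro ⟨x', ⟨⟨hx0, hxN⟩, y', ⟨⟨hy1, hy2⟩, rfl, rfl⟩⟩⟩
      have hmax0 : (0:ℤ) ≤ y' := le_trans (le_max_left _ _) hy1
      have hmax1 : 2*N - 2*N*x' ≤ y' := le_trans (le_max_right _ _) hy1
      exact ⟨hmax0, by linarith, by linarith, by linarith⟩
  rw [hset, Set.ncard_coe_finset]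
  rw [Finset.card_biUnion]
  · have hcard : ∀ x ∈ Finset.Icc (0:ℤ) N,
        ((Finset.Icc (max 0 (2*N - 2*N*x)) (2*N - 2*x)).image fun y => (x, y)).card
          = (2*N - 2*x + 1 - max 0 (2*N - 2*N*x)).toNat := by
      intro x hx
      rw [Finset.card_image_of_injective _ (fun a b h => (Prod.mk.injEq _ _ _ _ ▸ h : _ ∧ _).2),
        Int.card_Icc]
    rw [Finset.sum_congr rfl hcard]
    have htrans : ∑ x ∈ Finset.Icc (0:ℤ) N, (2*N - 2*x + 1 - max 0 (2*N - 2*N*x)).toNat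
        = ∑ i ∈ Finset.range (n+1), (2*N - 2*(i:ℤ) + 1 - max 0 (2*N - 2*N*(i:ℤ))).toNat := by
      refine Finset.sum_nbij' (fun x => x.toNat) (fun i => (i : ℤ)) ?_ ?_ ?_ ?_ ?_
      · intro x hx
        simp only [Finset.mem_Icc] at hx
        simp only [Finset.mem_range]
        omega
      · intro i hi
        simp only [Finset.mem_range] at hi
        simp only [Finset.mem_Icc]
        omega
      · intro x hx
        simp only [Finset.mem_Icc] at hx
        exact Int.toNat_of_nonneg hx.1
      · intro i _
        simp
      · intro x hx
        simp only [Finset.mem_Icc] at hx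
        rw [Int.toNat_of_nonneg hx.1]
    rw [htrans]
    have hval : ∀ i ∈ Finset.range (n+1),
        (2*N - 2*(i:ℤ) + 1 - max 0 (2*N - 2*N*(i:ℤ))).toNat
          = if i = 0 then 1 else 2*(n-i)+1 := by
      intro i hi
      simp only [Finset.mem_range] at hi
      rcases Nat.eq_zero_or_pos i with rfl | hipos
      · push_cast
        omega
      · have hi1 : (1:ℤ) ≤ (i:ℤ) := by exact_mod_cast hipos
        have hneg : 2*N - 2*N*(i:ℤ) ≤ 0 := by nlinarith
        rw [max_eq_left hneg, if_neg (by omega : i ≠ 0)]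
        have hiN : (i:ℤ) ≤ N := by omega
        omega
    rw [Finset.sum_congr rfl hval, Finset.sum_range_succ']
    have : ∀ i ∈ Finset.range n, (if i + 1 = 0 then 1 else 2*(n-(i+1))+1) = 2*(n-1-i)+1 := by
      intro i _
      rw [if_neg (Nat.succ_ne_zero i)]
      omega
    rw [Finset.sum_congr rfl this, Finset.sum_range_reflect (fun j => 2*j+1) n, sum_odds]
    simp
  · intro x hx y hy hxy
    simp only [Finset.disjoint_left, Finset.mem_image, Finset.mem_Icc]
    rintro a ⟨y1, _, rfl⟩ ⟨y2, _, h⟩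
    exact hxy (congrArg Prod.fst h).symm

/-- For `n ≥ 1`, the number of lattice points of `ℤ²` lying in the
triangle `conv{(1,0), (n,0), (0,2n)} ⊂ ℝ²` equals `n² + 1`. -/
theorem stmt_11 (n : ℕ) (hn : 1 ≤ n) :
    Set.ncard {p : ℤ × ℤ |
        (((p.1 : ℝ), (p.2 : ℝ)) : ℝ × ℝ) ∈
          convexHull ℝ {((1 : ℝ), (0 : ℝ)), ((n : ℝ), (0 : ℝ)),
            ((0 : ℝ), (2 * n : ℝ))}}
      = n ^ 2 + 1 := by
  have hsets : {p : ℤ × ℤ |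
        (((p.1 : ℝ), (p.2 : ℝ)) : ℝ × ℝ) ∈
          convexHull ℝ {((1 : ℝ), (0 : ℝ)), ((n : ℝ), (0 : ℝ)),
            ((0 : ℝ), (2 * n : ℝ))}}
      = {p : ℤ × ℤ | 0 ≤ p.2 ∧ p.2 ≤ 2*(n:ℤ) ∧ 2*p.1 + p.2 ≤ 2*(n:ℤ) ∧
          2*(n:ℤ) ≤ 2*(n:ℤ)*p.1 + p.2} := by
    ext ⟨x, y⟩
    rw [Set.mem_setOf_eq, hull_eq n hn, Set.mem_setOf_eq, Set.mem_setOf_eq]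
    dsimp only
    constructor
    · rintro ⟨h1, h2, h3, h4⟩
      exact ⟨by exact_mod_cast h1, by exact_mod_cast h2, by exact_mod_cast h3,
        by exact_mod_cast h4⟩
    · rintro ⟨h1, h2, h3, h4⟩
      exact ⟨by exact_mod_cast h1, by exact_mod_cast h2, by exact_mod_cast h3,
        by exact_mod_cast h4⟩
  rw [hsets]
  exact card_count n hn
end

section
/- Let n ≥ 3 be odd and let 1 ≤ i ≤ n. Let S be the (n−1)×(n−1) integer matrix whose rows and columns are indexed by the set {1, …, n} \ {i}, with entries S_{jk} = 0 if j = k; S_{jk} = 1 if j < k and j, k lie on the same side of i (both < i or both > i); S_{jk} = −1 if j > k and j, k lie on the same side of i; and S_{jk} = 1 if j and k lie on opposite sides of i. Then det S = 1 or det S = −1; in particular S is invertible over ℤ. -/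
/-- The index set `{1, …, n} \ {i}`. -/
abbrev stmtIdx (n i : ℕ) : Type := {j : ℕ // j ∈ (Finset.Icc 1 n).erase i}

/-- The matrix `S`, indexed by `{1, …, n} \ {i}`, with `S_{jk} = 0` on the
diagonal, `S_{jk} = 1` if `j < k` and `j, k` are on the same side of `i`,
`S_{jk} = −1` if `j > k` and `j, k` are on the same side of `i`, and
`S_{jk} = 1` if `j` and `k` are on opposite sides of `i`. -/
def stmtS (n i : ℕ) : Matrix (stmtIdx n i) (stmtIdx n i) ℤ := fun j k =>
  if (j : ℕ) = (k : ℕ) then 0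
  else if ((j : ℕ) < i ↔ (k : ℕ) < i) then
    (if (j : ℕ) < (k : ℕ) then 1 else -1)
  else 1

def sv14 (i j k : ℕ) : ℤ :=
  if j = k then 0 else if (j < i ↔ k < i) then (if j < k then 1 else -1) else 1

def dd14 (i k : ℕ) : ℤ := if k < i then (-1)^k else (-1)^(k+i)

def FF14 (i j m k : ℕ) : ℤ := sv14 i j k * dd14 i k * sv14 i k m

lemma sv14_diag (i j k : ℕ) (h : j = k) : sv14 i j k = 0 := by
  unfold sv14; rw [if_pos h]

lemma sv14_lt (i j k : ℕ) (h2 : j < i ↔ k < i) (h1 : j < k) : sv14 i j k = 1 := by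
  unfold sv14; rw [if_neg (by omega), if_pos h2, if_pos h1]

lemma sv14_gt (i j k : ℕ) (h2 : j < i ↔ k < i) (h1 : k < j) : sv14 i j k = -1 := by
  unfold sv14; rw [if_neg (by omega), if_pos h2, if_neg (by omega)]

lemma sv14_opp (i j k : ℕ) (h : ¬(j < i ↔ k < i)) : sv14 i j k = 1 := by
  unfold sv14; rw [if_neg (by omega), if_neg h]

lemma dd14_lt {i k : ℕ} (h : k < i) : dd14 i k = (-1)^k := by
  unfold dd14; rw [if_pos h]

lemma dd14_ge {i k : ℕ} (h : ¬ k < i) : dd14 i k = (-1)^(k+i) := by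
  unfold dd14; rw [if_neg h]

lemma regsum14 (f : ℕ → ℤ) (c : ℤ) (t a b : ℕ) (hab : a ≤ b)
    (hf : ∀ k ∈ Finset.Ico a b, f k = c * (-1)^(k+t)) :
    2 * ∑ k ∈ Finset.Ico a b, f k = c * ((-1:ℤ)^(a+t) - (-1)^(b+t)) := by
  induction b, hab using Nat.le_induction with
  | base => simp
  | succ b hb ih =>
      rw [Finset.sum_Ico_succ_top hb, mul_add,
        ih (fun k hk => hf k (by rw [Finset.mem_Ico] at hk ⊢; omega)),
        hf b (by rw [Finset.mem_Ico]; omega),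
        show b+1+t = (b+t)+1 from by omega, pow_succ]
      ring

lemma key14 (n i j m : ℕ) (hodd : Odd n) (hi1 : 1 ≤ i) (hin : i ≤ n)
    (hj1 : 1 ≤ j) (hjn : j ≤ n) (hji : j ≠ i)
    (hm1 : 1 ≤ m) (hmn : m ≤ n) (hmi : m ≠ i) :
    ∑ k ∈ (Finset.Icc 1 n).erase i, FF14 i j m k
      = if j = m then dd14 i m else 0 := by
  obtain ⟨c, hc⟩ := hodd
  have hs : (Finset.Icc 1 n).erase i = Finset.Ico 1 i ∪ Finset.Ico (i+1) (n+1) := by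
    ext x
    simp only [Finset.mem_erase, Finset.mem_Icc, Finset.mem_union, Finset.mem_Ico]
    omega
  have hdisj : Disjoint (Finset.Ico 1 i) (Finset.Ico (i+1) (n+1)) := by
    rw [Finset.disjoint_left]
    intro x hx hx'
    rw [Finset.mem_Ico] at hx hx'
    omega
  rw [hs, Finset.sum_union hdisj]
  refine mul_left_cancel₀ (show (2:ℤ) ≠ 0 by norm_num) ?_
  -- exponent conversion facts
  have Ha : ((-1:ℤ))^(1+0) = -1 := by norm_num
  have Hi0 : ((-1:ℤ))^(i+0) = (-1)^i := by rw [Nat.add_zero]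
  have Hj : ((-1:ℤ))^(j+0) = (-1)^j := by rw [Nat.add_zero]
  have Hj1 : ((-1:ℤ))^(j+1+0) = -(-1:ℤ)^j := by rw [Nat.add_zero, pow_succ]; ring
  have Hm : ((-1:ℤ))^(m+0) = (-1)^m := by rw [Nat.add_zero]
  have Hm1 : ((-1:ℤ))^(m+1+0) = -(-1:ℤ)^m := by rw [Nat.add_zero, pow_succ]; ring
  have Bi1 : ((-1:ℤ))^(i+1+i) = -1 := Odd.neg_one_pow ⟨i, by omega⟩
  have Bj1 : ((-1:ℤ))^(j+1+i) = -(-1:ℤ)^(j+i) := by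
    rw [show j+1+i = (j+i)+1 from by omega, pow_succ]; ring
  have Bm1 : ((-1:ℤ))^(m+1+i) = -(-1:ℤ)^(m+i) := by
    rw [show m+1+i = (m+i)+1 from by omega, pow_succ]; ring
  have Bn : ((-1:ℤ))^(n+1+i) = (-1:ℤ)^i := by
    rw [show n+1+i = (n+1)+i from rfl, pow_add,
      Even.neg_one_pow ⟨c+1, by omega⟩, one_mul]
  by_cases hjm : j = m
  · subst hjm
    rw [if_pos rfl]
    by_cases hlt : j < i
    · -- Case A : j = m < i
      rw [dd14_lt hlt]
      have r1 := regsum14 (FF14 i j j) (-1) 0 1 j (by omega) (by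
        intro k hk; rw [Finset.mem_Ico] at hk
        unfold FF14
        rw [sv14_gt i j k (by omega) (by omega), dd14_lt (by omega),
          sv14_lt i k j (by omega) (by omega)]; ring)
      have r2 := regsum14 (FF14 i j j) 0 0 j (j+1) (by omega) (by
        intro k hk; rw [Finset.mem_Ico] at hk
        unfold FF14
        rw [sv14_diag i j k (by omega)]; ring)
      have r3 := regsum14 (FF14 i j j) (-1) 0 (j+1) i (by omega) (by
        intro k hk; rw [Finset.mem_Ico] at hk
        unfold FF14
        rw [sv14_lt i j k (by omega) (by omega), dd14_lt (by omega),
          sv14_gt i k j (by omega) (by omega)]; ring)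
      have r4 := regsum14 (FF14 i j j) 1 i (i+1) (n+1) (by omega) (by
        intro k hk; rw [Finset.mem_Ico] at hk
        unfold FF14
        rw [sv14_opp i j k (by omega), dd14_ge (by omega),
          sv14_opp i k j (by omega)]; ring)
      have t1 := Finset.sum_Ico_consecutive (FF14 i j j)
        (show 1 ≤ j by omega) (show j ≤ j+1 by omega)
      have t2 := Finset.sum_Ico_consecutive (FF14 i j j)
        (show 1 ≤ j+1 by omega) (show j+1 ≤ i by omega)
      linarith
    · -- Case B : j = m > i
      rw [dd14_ge hlt]
      have r1 := regsum14 (FF14 i j j) 1 0 1 i (by omega) (by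
        intro k hk; rw [Finset.mem_Ico] at hk
        unfold FF14
        rw [sv14_opp i j k (by omega), dd14_lt (by omega),
          sv14_opp i k j (by omega)]; ring)
      have r2 := regsum14 (FF14 i j j) (-1) i (i+1) j (by omega) (by
        intro k hk; rw [Finset.mem_Ico] at hk
        unfold FF14
        rw [sv14_gt i j k (by omega) (by omega), dd14_ge (by omega),
          sv14_lt i k j (by omega) (by omega)]; ring)
      have r3 := regsum14 (FF14 i j j) 0 i j (j+1) (by omega) (by
        intro k hk; rw [Finset.mem_Ico] at hk
        unfold FF14
        rw [sv14_diag i j k (by omega)]; ring)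
      have r4 := regsum14 (FF14 i j j) (-1) i (j+1) (n+1) (by omega) (by
        intro k hk; rw [Finset.mem_Ico] at hk
        unfold FF14
        rw [sv14_lt i j k (by omega) (by omega), dd14_ge (by omega),
          sv14_gt i k j (by omega) (by omega)]; ring)
      have t1 := Finset.sum_Ico_consecutive (FF14 i j j)
        (show i+1 ≤ j by omega) (show j ≤ j+1 by omega)
      have t2 := Finset.sum_Ico_consecutive (FF14 i j j)
        (show i+1 ≤ j+1 by omega) (show j+1 ≤ n+1 by omega)
      linarith
  · rw [if_neg hjm]
    rcases Nat.lt_or_ge j i with hji' | hji'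
    · rcases Nat.lt_or_ge m i with hmi' | hmi'
      · rcases Nat.lt_or_ge j m with ho | ho
        · -- Case C : j < m < i
          have r1 := regsum14 (FF14 i j m) (-1) 0 1 j (by omega) (by
            intro k hk; rw [Finset.mem_Ico] at hk
            unfold FF14
            rw [sv14_gt i j k (by omega) (by omega), dd14_lt (by omega),
              sv14_lt i k m (by omega) (by omega)]; ring)
          have r2 := regsum14 (FF14 i j m) 0 0 j (j+1) (by omega) (by
            intro k hk; rw [Finset.mem_Ico] at hk
            unfold FF14
            rw [sv14_diag i j k (by omega)]; ring)
          have r3 := regsum14 (FF14 i j m) 1 0 (j+1) m (by omega) (by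
            intro k hk; rw [Finset.mem_Ico] at hk
            unfold FF14
            rw [sv14_lt i j k (by omega) (by omega), dd14_lt (by omega),
              sv14_lt i k m (by omega) (by omega)]; ring)
          have r4 := regsum14 (FF14 i j m) 0 0 m (m+1) (by omega) (by
            intro k hk; rw [Finset.mem_Ico] at hk
            unfold FF14
            rw [sv14_diag i k m (by omega)]; ring)
          have r5 := regsum14 (FF14 i j m) (-1) 0 (m+1) i (by omega) (by
            intro k hk; rw [Finset.mem_Ico] at hk
            unfold FF14
            rw [sv14_lt i j k (by omega) (by omega), dd14_lt (by omega),
              sv14_gt i k m (by omega) (by omega)]; ring)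
          have r6 := regsum14 (FF14 i j m) 1 i (i+1) (n+1) (by omega) (by
            intro k hk; rw [Finset.mem_Ico] at hk
            unfold FF14
            rw [sv14_opp i j k (by omega), dd14_ge (by omega),
              sv14_opp i k m (by omega)]; ring)
          have t1 := Finset.sum_Ico_consecutive (FF14 i j m)
            (show 1 ≤ j by omega) (show j ≤ j+1 by omega)
          have t2 := Finset.sum_Ico_consecutive (FF14 i j m)
            (show 1 ≤ j+1 by omega) (show j+1 ≤ m by omega)
          have t3 := Finset.sum_Ico_consecutive (FF14 i j m)
            (show 1 ≤ m by omega) (show m ≤ m+1 by omega)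
          have t4 := Finset.sum_Ico_consecutive (FF14 i j m)
            (show 1 ≤ m+1 by omega) (show m+1 ≤ i by omega)
          linarith
        · -- Case D : m < j < i
          have r1 := regsum14 (FF14 i j m) (-1) 0 1 m (by omega) (by
            intro k hk; rw [Finset.mem_Ico] at hk
            unfold FF14
            rw [sv14_gt i j k (by omega) (by omega), dd14_lt (by omega),
              sv14_lt i k m (by omega) (by omega)]; ring)
          have r2 := regsum14 (FF14 i j m) 0 0 m (m+1) (by omega) (by
            intro k hk; rw [Finset.mem_Ico] at hk
            unfold FF14
            rw [sv14_diag i k m (by omega)]; ring)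
          have r3 := regsum14 (FF14 i j m) 1 0 (m+1) j (by omega) (by
            intro k hk; rw [Finset.mem_Ico] at hk
            unfold FF14
            rw [sv14_gt i j k (by omega) (by omega), dd14_lt (by omega),
              sv14_gt i k m (by omega) (by omega)]; ring)
          have r4 := regsum14 (FF14 i j m) 0 0 j (j+1) (by omega) (by
            intro k hk; rw [Finset.mem_Ico] at hk
            unfold FF14
            rw [sv14_diag i j k (by omega)]; ring)
          have r5 := regsum14 (FF14 i j m) (-1) 0 (j+1) i (by omega) (by
            intro k hk; rw [Finset.mem_Ico] at hk
            unfold FF14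
            rw [sv14_lt i j k (by omega) (by omega), dd14_lt (by omega),
              sv14_gt i k m (by omega) (by omega)]; ring)
          have r6 := regsum14 (FF14 i j m) 1 i (i+1) (n+1) (by omega) (by
            intro k hk; rw [Finset.mem_Ico] at hk
            unfold FF14
            rw [sv14_opp i j k (by omega), dd14_ge (by omega),
              sv14_opp i k m (by omega)]; ring)
          have t1 := Finset.sum_Ico_consecutive (FF14 i j m)
            (show 1 ≤ m by omega) (show m ≤ m+1 by omega)
          have t2 := Finset.sum_Ico_consecutive (FF14 i j m)
            (show 1 ≤ m+1 by omega) (show m+1 ≤ j by omega)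
          have t3 := Finset.sum_Ico_consecutive (FF14 i j m)
            (show 1 ≤ j by omega) (show j ≤ j+1 by omega)
          have t4 := Finset.sum_Ico_consecutive (FF14 i j m)
            (show 1 ≤ j+1 by omega) (show j+1 ≤ i by omega)
          linarith
      · -- Case G : j < i < m
        have r1 := regsum14 (FF14 i j m) (-1) 0 1 j (by omega) (by
          intro k hk; rw [Finset.mem_Ico] at hk
          unfold FF14
          rw [sv14_gt i j k (by omega) (by omega), dd14_lt (by omega),
            sv14_opp i k m (by omega)]; ring)
        have r2 := regsum14 (FF14 i j m) 0 0 j (j+1) (by omega) (by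
          intro k hk; rw [Finset.mem_Ico] at hk
          unfold FF14
          rw [sv14_diag i j k (by omega)]; ring)
        have r3 := regsum14 (FF14 i j m) 1 0 (j+1) i (by omega) (by
          intro k hk; rw [Finset.mem_Ico] at hk
          unfold FF14
          rw [sv14_lt i j k (by omega) (by omega), dd14_lt (by omega),
            sv14_opp i k m (by omega)]; ring)
        have r4 := regsum14 (FF14 i j m) 1 i (i+1) m (by omega) (by
          intro k hk; rw [Finset.mem_Ico] at hk
          unfold FF14
          rw [sv14_opp i j k (by omega), dd14_ge (by omega),
            sv14_lt i k m (by omega) (by omega)]; ring)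
        have r5 := regsum14 (FF14 i j m) 0 i m (m+1) (by omega) (by
          intro k hk; rw [Finset.mem_Ico] at hk
          unfold FF14
          rw [sv14_diag i k m (by omega)]; ring)
        have r6 := regsum14 (FF14 i j m) (-1) i (m+1) (n+1) (by omega) (by
          intro k hk; rw [Finset.mem_Ico] at hk
          unfold FF14
          rw [sv14_opp i j k (by omega), dd14_ge (by omega),
            sv14_gt i k m (by omega) (by omega)]; ring)
        have t1 := Finset.sum_Ico_consecutive (FF14 i j m)
          (show 1 ≤ j by omega) (show j ≤ j+1 by omega)
        have t2 := Finset.sum_Ico_consecutive (FF14 i j m)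
          (show 1 ≤ j+1 by omega) (show j+1 ≤ i by omega)
        have t3 := Finset.sum_Ico_consecutive (FF14 i j m)
          (show i+1 ≤ m by omega) (show m ≤ m+1 by omega)
        have t4 := Finset.sum_Ico_consecutive (FF14 i j m)
          (show i+1 ≤ m+1 by omega) (show m+1 ≤ n+1 by omega)
        linarith
    · rcases Nat.lt_or_ge m i with hmi' | hmi'
      · -- Case H : m < i < j
        have r1 := regsum14 (FF14 i j m) 1 0 1 m (by omega) (by
          intro k hk; rw [Finset.mem_Ico] at hk
          unfold FF14
          rw [sv14_opp i j k (by omega), dd14_lt (by omega),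
            sv14_lt i k m (by omega) (by omega)]; ring)
        have r2 := regsum14 (FF14 i j m) 0 0 m (m+1) (by omega) (by
          intro k hk; rw [Finset.mem_Ico] at hk
          unfold FF14
          rw [sv14_diag i k m (by omega)]; ring)
        have r3 := regsum14 (FF14 i j m) (-1) 0 (m+1) i (by omega) (by
          intro k hk; rw [Finset.mem_Ico] at hk
          unfold FF14
          rw [sv14_opp i j k (by omega), dd14_lt (by omega),
            sv14_gt i k m (by omega) (by omega)]; ring)
        have r4 := regsum14 (FF14 i j m) (-1) i (i+1) j (by omega) (by
          intro k hk; rw [Finset.mem_Ico] at hk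
          unfold FF14
          rw [sv14_gt i j k (by omega) (by omega), dd14_ge (by omega),
            sv14_opp i k m (by omega)]; ring)
        have r5 := regsum14 (FF14 i j m) 0 i j (j+1) (by omega) (by
          intro k hk; rw [Finset.mem_Ico] at hk
          unfold FF14
          rw [sv14_diag i j k (by omega)]; ring)
        have r6 := regsum14 (FF14 i j m) 1 i (j+1) (n+1) (by omega) (by
          intro k hk; rw [Finset.mem_Ico] at hk
          unfold FF14
          rw [sv14_lt i j k (by omega) (by omega), dd14_ge (by omega),
            sv14_opp i k m (by omega)]; ring)
        have t1 := Finset.sum_Ico_consecutive (FF14 i j m)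
          (show 1 ≤ m by omega) (show m ≤ m+1 by omega)
        have t2 := Finset.sum_Ico_consecutive (FF14 i j m)
          (show 1 ≤ m+1 by omega) (show m+1 ≤ i by omega)
        have t3 := Finset.sum_Ico_consecutive (FF14 i j m)
          (show i+1 ≤ j by omega) (show j ≤ j+1 by omega)
        have t4 := Finset.sum_Ico_consecutive (FF14 i j m)
          (show i+1 ≤ j+1 by omega) (show j+1 ≤ n+1 by omega)
        linarith
      · rcases Nat.lt_or_ge j m with ho | ho
        · -- Case E : i < j < m
          have r1 := regsum14 (FF14 i j m) 1 0 1 i (by omega) (by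
            intro k hk; rw [Finset.mem_Ico] at hk
            unfold FF14
            rw [sv14_opp i j k (by omega), dd14_lt (by omega),
              sv14_opp i k m (by omega)]; ring)
          have r2 := regsum14 (FF14 i j m) (-1) i (i+1) j (by omega) (by
            intro k hk; rw [Finset.mem_Ico] at hk
            unfold FF14
            rw [sv14_gt i j k (by omega) (by omega), dd14_ge (by omega),
              sv14_lt i k m (by omega) (by omega)]; ring)
          have r3 := regsum14 (FF14 i j m) 0 i j (j+1) (by omega) (by
            intro k hk; rw [Finset.mem_Ico] at hk
            unfold FF14
            rw [sv14_diag i j k (by omega)]; ring)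
          have r4 := regsum14 (FF14 i j m) 1 i (j+1) m (by omega) (by
            intro k hk; rw [Finset.mem_Ico] at hk
            unfold FF14
            rw [sv14_lt i j k (by omega) (by omega), dd14_ge (by omega),
              sv14_lt i k m (by omega) (by omega)]; ring)
          have r5 := regsum14 (FF14 i j m) 0 i m (m+1) (by omega) (by
            intro k hk; rw [Finset.mem_Ico] at hk
            unfold FF14
            rw [sv14_diag i k m (by omega)]; ring)
          have r6 := regsum14 (FF14 i j m) (-1) i (m+1) (n+1) (by omega) (by
            intro k hk; rw [Finset.mem_Ico] at hk
            unfold FF14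
            rw [sv14_lt i j k (by omega) (by omega), dd14_ge (by omega),
              sv14_gt i k m (by omega) (by omega)]; ring)
          have t1 := Finset.sum_Ico_consecutive (FF14 i j m)
            (show i+1 ≤ j by omega) (show j ≤ j+1 by omega)
          have t2 := Finset.sum_Ico_consecutive (FF14 i j m)
            (show i+1 ≤ j+1 by omega) (show j+1 ≤ m by omega)
          have t3 := Finset.sum_Ico_consecutive (FF14 i j m)
            (show i+1 ≤ m by omega) (show m ≤ m+1 by omega)
          have t4 := Finset.sum_Ico_consecutive (FF14 i j m)
            (show i+1 ≤ m+1 by omega) (show m+1 ≤ n+1 by omega)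
          linarith
        · -- Case F : i < m < j
          have r1 := regsum14 (FF14 i j m) 1 0 1 i (by omega) (by
            intro k hk; rw [Finset.mem_Ico] at hk
            unfold FF14
            rw [sv14_opp i j k (by omega), dd14_lt (by omega),
              sv14_opp i k m (by omega)]; ring)
          have r2 := regsum14 (FF14 i j m) (-1) i (i+1) m (by omega) (by
            intro k hk; rw [Finset.mem_Ico] at hk
            unfold FF14
            rw [sv14_gt i j k (by omega) (by omega), dd14_ge (by omega),
              sv14_lt i k m (by omega) (by omega)]; ring)
          have r3 := regsum14 (FF14 i j m) 0 i m (m+1) (by omega) (by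
            intro k hk; rw [Finset.mem_Ico] at hk
            unfold FF14
            rw [sv14_diag i k m (by omega)]; ring)
          have r4 := regsum14 (FF14 i j m) 1 i (m+1) j (by omega) (by
            intro k hk; rw [Finset.mem_Ico] at hk
            unfold FF14
            rw [sv14_gt i j k (by omega) (by omega), dd14_ge (by omega),
              sv14_gt i k m (by omega) (by omega)]; ring)
          have r5 := regsum14 (FF14 i j m) 0 i j (j+1) (by omega) (by
            intro k hk; rw [Finset.mem_Ico] at hk
            unfold FF14
            rw [sv14_diag i j k (by omega)]; ring)
          have r6 := regsum14 (FF14 i j m) (-1) i (j+1) (n+1) (by omega) (by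
            intro k hk; rw [Finset.mem_Ico] at hk
            unfold FF14
            rw [sv14_lt i j k (by omega) (by omega), dd14_ge (by omega),
              sv14_gt i k m (by omega) (by omega)]; ring)
          have t1 := Finset.sum_Ico_consecutive (FF14 i j m)
            (show i+1 ≤ m by omega) (show m ≤ m+1 by omega)
          have t2 := Finset.sum_Ico_consecutive (FF14 i j m)
            (show i+1 ≤ m+1 by omega) (show m+1 ≤ j by omega)
          have t3 := Finset.sum_Ico_consecutive (FF14 i j m)
            (show i+1 ≤ j by omega) (show j ≤ j+1 by omega)
          have t4 := Finset.sum_Ico_consecutive (FF14 i j m)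
            (show i+1 ≤ j+1 by omega) (show j+1 ≤ n+1 by omega)
          linarith

lemma dd14_sq (i k : ℕ) : dd14 i k * dd14 i k = 1 := by
  unfold dd14
  split_ifs <;> rw [← pow_add] <;> exact Even.neg_one_pow ⟨_, rfl⟩

/-- For odd `n ≥ 3` and `1 ≤ i ≤ n`, the matrix `S` has
determinant `1` or `−1`; in particular it is invertible over `ℤ`. -/
theorem stmt_14 (n i : ℕ) (hn : 3 ≤ n) (hodd : Odd n) (hi1 : 1 ≤ i) (hin : i ≤ n) :
    (stmtS n i).det = 1 ∨ (stmtS n i).det = -1 := by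
  classical
  set D : Matrix (stmtIdx n i) (stmtIdx n i) ℤ :=
    Matrix.diagonal (fun j => dd14 i (j : ℕ)) with hD
  have hmul : (stmtS n i * D) * (stmtS n i * D) = 1 := by
    ext j m
    rw [Matrix.mul_apply]
    simp only [hD, Matrix.mul_diagonal]
    have hstep : ∀ k : stmtIdx n i,
        stmtS n i j k * dd14 i (k : ℕ) * (stmtS n i k m * dd14 i (m : ℕ))
          = FF14 i (j : ℕ) (m : ℕ) (k : ℕ) * dd14 i (m : ℕ) := by
      intro k
      show sv14 i (j:ℕ) (k:ℕ) * dd14 i (k:ℕ) * (sv14 i (k:ℕ) (m:ℕ) * dd14 i (m:ℕ)) = _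
      unfold FF14; ring
    rw [Finset.sum_congr rfl (fun k _ => hstep k), ← Finset.sum_mul]
    rw [Finset.sum_coe_sort ((Finset.Icc 1 n).erase i) (FF14 i (j:ℕ) (m:ℕ))]
    have hjmem := j.property
    have hmmem := m.property
    rw [Finset.mem_erase, Finset.mem_Icc] at hjmem hmmem
    rw [key14 n i (j:ℕ) (m:ℕ) hodd hi1 hin (by omega) (by omega) hjmem.1
      (by omega) (by omega) hmmem.1]
    by_cases h : j = m
    · subst h
      rw [if_pos rfl, dd14_sq, Matrix.one_apply_eq]
    · rw [if_neg (fun hh => h (Subtype.ext hh)), zero_mul, Matrix.one_apply_ne h]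
  have hdet := congrArg Matrix.det hmul
  rw [Matrix.det_mul, Matrix.det_one] at hdet
  have hu : IsUnit ((stmtS n i).det) := by
    refine IsUnit.of_mul_eq_one (D.det * ((stmtS n i * D).det)) ?_
    rw [Matrix.det_mul] at hdet ⊢
    linear_combination hdet
  exact Int.isUnit_iff.mp hu
end

section
/- Let n ≥ 3 be odd and let 1 ≤ i ≤ n. For each j ∈ {1, …, n} \ {i}, define the vector w_j ∈ ℤ^{{1,…,n}\{i}} by (w_j)_k = 0 if k = j; (w_j)_k = −1 if k lies strictly between i and j (i.e. min(i,j) < k < max(i,j)); and (w_j)_k = 1 otherwise. Then the n−1 vectors {w_j : j ∈ {1,…,n}\{i}} form a ℤ-basis of the lattice ℤ^{{1,…,n}\{i}}; equivalently, the integer matrix with rows w_j has determinant ±1, so the convex hull of {0} ∪ {w_j} in ℝ^{n−1} is the image of the standard simplex conv{0, e_1, …, e_{n−1}} under a linear map given by a matrix in GL(n−1,ℤ). -/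
/-- The vector `w_j ∈ ℤ^{{1,…,n}\{i}}`: `(w_j)_k = 0` if `k = j`, `(w_j)_k = −1`
if `k` lies strictly between `i` and `j`, and `(w_j)_k = 1` otherwise. -/
def stmtW (n i : ℕ) (j : stmtIdx n i) : stmtIdx n i → ℤ := fun k =>
  if (k : ℕ) = (j : ℕ) then 0
  else if (min i (j : ℕ) < (k : ℕ) ∧ (k : ℕ) < max i (j : ℕ)) then -1
  else 1

/-- `Fv i a b` is the natural-number version of the matrix entry `(w_a)_b`. -/
def Fv (i a b : ℕ) : ℤ :=
  if b = a then 0 else if min i a < b ∧ b < max i a then -1 else 1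

/-- The summand appearing in the product `M * (D M D)`. -/
def fcore (i j l k : ℕ) : ℤ := Fv i j k * (Fv i k l * (-1) ^ k)

lemma Fv_one (i a b : ℕ) (h1 : b ≠ a) (h2 : ¬(min i a < b ∧ b < max i a)) :
    Fv i a b = 1 := by
  unfold Fv; rw [if_neg h1, if_neg h2]

lemma Fv_neg (i a b : ℕ) (h1 : b ≠ a) (h2 : min i a < b ∧ b < max i a) :
    Fv i a b = -1 := by
  unfold Fv; rw [if_neg h1, if_pos h2]

lemma Fv_zero {i a : ℕ} : Fv i a a = 0 := by
  unfold Fv; rw [if_pos rfl]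

lemma sumIoc (u v : ℕ) (h : u ≤ v) :
    2 * ∑ k ∈ Finset.Ioc u v, (-1 : ℤ) ^ k = (-1) ^ v - (-1) ^ u := by
  induction v, h using Nat.le_induction with
  | base => simp
  | succ v hv ih =>
      rw [Finset.sum_Ioc_succ_top (by omega)]
      simp only [pow_succ] at *
      linarith

lemma pc (f : ℕ → ℤ) (c : ℤ) (u v : ℕ) (h : u ≤ v)
    (hf : ∀ k, u < k → k ≤ v → f k = c * (-1) ^ k) :
    2 * ∑ k ∈ Finset.Ioc u v, f k = c * ((-1) ^ v - (-1) ^ u) := by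
  have e : ∑ k ∈ Finset.Ioc u v, f k = ∑ k ∈ Finset.Ioc u v, c * (-1 : ℤ) ^ k :=
    Finset.sum_congr rfl fun k hk => by
      rw [Finset.mem_Ioc] at hk; exact hf k hk.1 hk.2
  rw [e, ← Finset.mul_sum,
    show (2 : ℤ) * (c * ∑ k ∈ Finset.Ioc u v, (-1) ^ k)
      = c * (2 * ∑ k ∈ Finset.Ioc u v, (-1) ^ k) by ring,
    sumIoc u v h]

lemma pz (f : ℕ → ℤ) (c : ℤ) (u v : ℕ) (h : u < v)
    (hf : ∀ k, u < k → k < v → f k = c * (-1) ^ k) (h0 : f v = 0) :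
    2 * ∑ k ∈ Finset.Ioc u v, f k = c * (-(-1) ^ v - (-1) ^ u) := by
  obtain ⟨w, rfl⟩ : ∃ w, v = w + 1 := ⟨v - 1, by omega⟩
  rw [Finset.sum_Ioc_succ_top (by omega : u ≤ w), h0, add_zero,
    pc f c u w (by omega) (fun k hk1 hk2 => hf k hk1 (by omega))]
  simp only [pow_succ]; ring

lemma core (n i j l : ℕ) (hodd : Odd n) (hi1 : 1 ≤ i) (hin : i ≤ n)
    (hj1 : 1 ≤ j) (hjn : j ≤ n) (hji : j ≠ i)
    (hl1 : 1 ≤ l) (hln : l ≤ n) (hli : l ≠ i) :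
    2 * ∑ k ∈ Finset.Ioc 0 n, fcore i j l k
      = 2 * ((-1) ^ i + if j = l then (-1 : ℤ) ^ l else 0) := by
  have hn : (-1 : ℤ) ^ n = -1 := hodd.neg_one_pow
  have h0 : (-1 : ℤ) ^ (0 : ℕ) = 1 := pow_zero _
  have he : (-1 : ℤ) ^ (i - 1) = -(-1) ^ i := by
    obtain ⟨w, rfl⟩ : ∃ w, i = w + 1 := ⟨i - 1, by omega⟩
    simp [pow_succ]
  rcases lt_or_gt_of_ne hji with hj | hj
  · rcases lt_or_gt_of_ne hli with hl | hl
    · rcases Nat.lt_trichotomy j l with hjl | hjl | hjl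
      · -- A1 : j < l < i
        rw [if_neg (by omega)]
        have s1 := pz (fcore i j l) (-1) 0 j (by omega)
          (fun k hk1 hk2 => by
            unfold fcore
            rw [Fv_one i j k (by omega) (by omega), Fv_neg i k l (by omega) (by omega)]; ring)
          (by unfold fcore; rw [Fv_zero]; ring)
        have s2 := pz (fcore i j l) 1 j l (by omega)
          (fun k hk1 hk2 => by
            unfold fcore
            rw [Fv_neg i j k (by omega) (by omega), Fv_neg i k l (by omega) (by omega)]; ring)
          (by unfold fcore; rw [Fv_zero]; ring)
        have s3 := pc (fcore i j l) (-1) l (i - 1) (by omega)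
          (fun k hk1 hk2 => by
            unfold fcore
            rw [Fv_neg i j k (by omega) (by omega), Fv_one i k l (by omega) (by omega)]; ring)
        have s4 := pc (fcore i j l) 1 (i - 1) n (by omega)
          (fun k hk1 hk2 => by
            unfold fcore
            rw [Fv_one i j k (by omega) (by omega), Fv_one i k l (by omega) (by omega)]; ring)
        have t1 : (∑ k ∈ Finset.Ioc 0 j, fcore i j l k)
            + ∑ k ∈ Finset.Ioc j l, fcore i j l k
            = ∑ k ∈ Finset.Ioc 0 l, fcore i j l k :=
          Finset.sum_Ioc_consecutive _ (by omega) (by omega)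
        have t2 : (∑ k ∈ Finset.Ioc 0 l, fcore i j l k)
            + ∑ k ∈ Finset.Ioc l (i - 1), fcore i j l k
            = ∑ k ∈ Finset.Ioc 0 (i - 1), fcore i j l k :=
          Finset.sum_Ioc_consecutive _ (by omega) (by omega)
        have t3 : (∑ k ∈ Finset.Ioc 0 (i - 1), fcore i j l k)
            + ∑ k ∈ Finset.Ioc (i - 1) n, fcore i j l k
            = ∑ k ∈ Finset.Ioc 0 n, fcore i j l k :=
          Finset.sum_Ioc_consecutive _ (by omega) (by omega)
        linarith
      · -- A2 : j = l < i
        subst hjl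
        rw [if_pos rfl]
        have s1 := pz (fcore i j j) (-1) 0 j (by omega)
          (fun k hk1 hk2 => by
            unfold fcore
            rw [Fv_one i j k (by omega) (by omega), Fv_neg i k j (by omega) (by omega)]; ring)
          (by unfold fcore; rw [Fv_zero]; ring)
        have s2 := pc (fcore i j j) (-1) j (i - 1) (by omega)
          (fun k hk1 hk2 => by
            unfold fcore
            rw [Fv_neg i j k (by omega) (by omega), Fv_one i k j (by omega) (by omega)]; ring)
        have s3 := pc (fcore i j j) 1 (i - 1) n (by omega)
          (fun k hk1 hk2 => by
            unfold fcore
            rw [Fv_one i j k (by omega) (by omega), Fv_one i k j (by omega) (by omega)]; ring)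
        have t1 : (∑ k ∈ Finset.Ioc 0 j, fcore i j j k)
            + ∑ k ∈ Finset.Ioc j (i - 1), fcore i j j k
            = ∑ k ∈ Finset.Ioc 0 (i - 1), fcore i j j k :=
          Finset.sum_Ioc_consecutive _ (by omega) (by omega)
        have t2 : (∑ k ∈ Finset.Ioc 0 (i - 1), fcore i j j k)
            + ∑ k ∈ Finset.Ioc (i - 1) n, fcore i j j k
            = ∑ k ∈ Finset.Ioc 0 n, fcore i j j k :=
          Finset.sum_Ioc_consecutive _ (by omega) (by omega)
        linarith
      · -- A3 : l < j < i
        rw [if_neg (by omega)]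
        have s1 := pz (fcore i j l) (-1) 0 l (by omega)
          (fun k hk1 hk2 => by
            unfold fcore
            rw [Fv_one i j k (by omega) (by omega), Fv_neg i k l (by omega) (by omega)]; ring)
          (by unfold fcore; rw [Fv_zero]; ring)
        have s2 := pz (fcore i j l) 1 l j (by omega)
          (fun k hk1 hk2 => by
            unfold fcore
            rw [Fv_one i j k (by omega) (by omega), Fv_one i k l (by omega) (by omega)]; ring)
          (by unfold fcore; rw [Fv_zero]; ring)
        have s3 := pc (fcore i j l) (-1) j (i - 1) (by omega)
          (fun k hk1 hk2 => by
            unfold fcore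
            rw [Fv_neg i j k (by omega) (by omega), Fv_one i k l (by omega) (by omega)]; ring)
        have s4 := pc (fcore i j l) 1 (i - 1) n (by omega)
          (fun k hk1 hk2 => by
            unfold fcore
            rw [Fv_one i j k (by omega) (by omega), Fv_one i k l (by omega) (by omega)]; ring)
        have t1 : (∑ k ∈ Finset.Ioc 0 l, fcore i j l k)
            + ∑ k ∈ Finset.Ioc l j, fcore i j l k
            = ∑ k ∈ Finset.Ioc 0 j, fcore i j l k :=
          Finset.sum_Ioc_consecutive _ (by omega) (by omega)
        have t2 : (∑ k ∈ Finset.Ioc 0 j, fcore i j l k)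
            + ∑ k ∈ Finset.Ioc j (i - 1), fcore i j l k
            = ∑ k ∈ Finset.Ioc 0 (i - 1), fcore i j l k :=
          Finset.sum_Ioc_consecutive _ (by omega) (by omega)
        have t3 : (∑ k ∈ Finset.Ioc 0 (i - 1), fcore i j l k)
            + ∑ k ∈ Finset.Ioc (i - 1) n, fcore i j l k
            = ∑ k ∈ Finset.Ioc 0 n, fcore i j l k :=
          Finset.sum_Ioc_consecutive _ (by omega) (by omega)
        linarith
    · -- B : j < i < l
      rw [if_neg (by omega)]
      have s1 := pz (fcore i j l) 1 0 j (by omega)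
        (fun k hk1 hk2 => by
          unfold fcore
          rw [Fv_one i j k (by omega) (by omega), Fv_one i k l (by omega) (by omega)]; ring)
        (by unfold fcore; rw [Fv_zero]; ring)
      have s2 := pc (fcore i j l) (-1) j (i - 1) (by omega)
        (fun k hk1 hk2 => by
          unfold fcore
          rw [Fv_neg i j k (by omega) (by omega), Fv_one i k l (by omega) (by omega)]; ring)
      have s3 := pz (fcore i j l) 1 (i - 1) l (by omega)
        (fun k hk1 hk2 => by
          unfold fcore
          rw [Fv_one i j k (by omega) (by omega), Fv_one i k l (by omega) (by omega)]; ring)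
        (by unfold fcore; rw [Fv_zero]; ring)
      have s4 := pc (fcore i j l) (-1) l n (by omega)
        (fun k hk1 hk2 => by
          unfold fcore
          rw [Fv_one i j k (by omega) (by omega), Fv_neg i k l (by omega) (by omega)]; ring)
      have t1 : (∑ k ∈ Finset.Ioc 0 j, fcore i j l k)
          + ∑ k ∈ Finset.Ioc j (i - 1), fcore i j l k
          = ∑ k ∈ Finset.Ioc 0 (i - 1), fcore i j l k :=
        Finset.sum_Ioc_consecutive _ (by omega) (by omega)
      have t2 : (∑ k ∈ Finset.Ioc 0 (i - 1), fcore i j l k)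
          + ∑ k ∈ Finset.Ioc (i - 1) l, fcore i j l k
          = ∑ k ∈ Finset.Ioc 0 l, fcore i j l k :=
        Finset.sum_Ioc_consecutive _ (by omega) (by omega)
      have t3 : (∑ k ∈ Finset.Ioc 0 l, fcore i j l k)
          + ∑ k ∈ Finset.Ioc l n, fcore i j l k
          = ∑ k ∈ Finset.Ioc 0 n, fcore i j l k :=
        Finset.sum_Ioc_consecutive _ (by omega) (by omega)
      linarith
  · rcases lt_or_gt_of_ne hli with hl | hl
    · -- C : l < i < j
      rw [if_neg (by omega)]
      have s1 := pz (fcore i j l) (-1) 0 l (by omega)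
        (fun k hk1 hk2 => by
          unfold fcore
          rw [Fv_one i j k (by omega) (by omega), Fv_neg i k l (by omega) (by omega)]; ring)
        (by unfold fcore; rw [Fv_zero]; ring)
      have s2 := pc (fcore i j l) 1 l i (by omega)
        (fun k hk1 hk2 => by
          unfold fcore
          rw [Fv_one i j k (by omega) (by omega), Fv_one i k l (by omega) (by omega)]; ring)
      have s3 := pz (fcore i j l) (-1) i j (by omega)
        (fun k hk1 hk2 => by
          unfold fcore
          rw [Fv_neg i j k (by omega) (by omega), Fv_one i k l (by omega) (by omega)]; ring)
        (by unfold fcore; rw [Fv_zero]; ring)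
      have s4 := pc (fcore i j l) 1 j n (by omega)
        (fun k hk1 hk2 => by
          unfold fcore
          rw [Fv_one i j k (by omega) (by omega), Fv_one i k l (by omega) (by omega)]; ring)
      have t1 : (∑ k ∈ Finset.Ioc 0 l, fcore i j l k)
          + ∑ k ∈ Finset.Ioc l i, fcore i j l k
          = ∑ k ∈ Finset.Ioc 0 i, fcore i j l k :=
        Finset.sum_Ioc_consecutive _ (by omega) (by omega)
      have t2 : (∑ k ∈ Finset.Ioc 0 i, fcore i j l k)
          + ∑ k ∈ Finset.Ioc i j, fcore i j l k
          = ∑ k ∈ Finset.Ioc 0 j, fcore i j l k :=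
        Finset.sum_Ioc_consecutive _ (by omega) (by omega)
      have t3 : (∑ k ∈ Finset.Ioc 0 j, fcore i j l k)
          + ∑ k ∈ Finset.Ioc j n, fcore i j l k
          = ∑ k ∈ Finset.Ioc 0 n, fcore i j l k :=
        Finset.sum_Ioc_consecutive _ (by omega) (by omega)
      linarith
    · rcases Nat.lt_trichotomy j l with hjl | hjl | hjl
      · -- D1 : i < j < l
        rw [if_neg (by omega)]
        have s1 := pc (fcore i j l) 1 0 i (by omega)
          (fun k hk1 hk2 => by
            unfold fcore
            rw [Fv_one i j k (by omega) (by omega), Fv_one i k l (by omega) (by omega)]; ring)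
        have s2 := pz (fcore i j l) (-1) i j (by omega)
          (fun k hk1 hk2 => by
            unfold fcore
            rw [Fv_neg i j k (by omega) (by omega), Fv_one i k l (by omega) (by omega)]; ring)
          (by unfold fcore; rw [Fv_zero]; ring)
        have s3 := pz (fcore i j l) 1 j l (by omega)
          (fun k hk1 hk2 => by
            unfold fcore
            rw [Fv_one i j k (by omega) (by omega), Fv_one i k l (by omega) (by omega)]; ring)
          (by unfold fcore; rw [Fv_zero]; ring)
        have s4 := pc (fcore i j l) (-1) l n (by omega)
          (fun k hk1 hk2 => by
            unfold fcore
            rw [Fv_one i j k (by omega) (by omega), Fv_neg i k l (by omega) (by omega)]; ring)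
        have t1 : (∑ k ∈ Finset.Ioc 0 i, fcore i j l k)
            + ∑ k ∈ Finset.Ioc i j, fcore i j l k
            = ∑ k ∈ Finset.Ioc 0 j, fcore i j l k :=
          Finset.sum_Ioc_consecutive _ (by omega) (by omega)
        have t2 : (∑ k ∈ Finset.Ioc 0 j, fcore i j l k)
            + ∑ k ∈ Finset.Ioc j l, fcore i j l k
            = ∑ k ∈ Finset.Ioc 0 l, fcore i j l k :=
          Finset.sum_Ioc_consecutive _ (by omega) (by omega)
        have t3 : (∑ k ∈ Finset.Ioc 0 l, fcore i j l k)
            + ∑ k ∈ Finset.Ioc l n, fcore i j l k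
            = ∑ k ∈ Finset.Ioc 0 n, fcore i j l k :=
          Finset.sum_Ioc_consecutive _ (by omega) (by omega)
        linarith
      · -- D2 : i < j = l
        subst hjl
        rw [if_pos rfl]
        have s1 := pc (fcore i j j) 1 0 i (by omega)
          (fun k hk1 hk2 => by
            unfold fcore
            rw [Fv_one i j k (by omega) (by omega), Fv_one i k j (by omega) (by omega)]; ring)
        have s2 := pz (fcore i j j) (-1) i j (by omega)
          (fun k hk1 hk2 => by
            unfold fcore
            rw [Fv_neg i j k (by omega) (by omega), Fv_one i k j (by omega) (by omega)]; ring)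
          (by unfold fcore; rw [Fv_zero]; ring)
        have s3 := pc (fcore i j j) (-1) j n (by omega)
          (fun k hk1 hk2 => by
            unfold fcore
            rw [Fv_one i j k (by omega) (by omega), Fv_neg i k j (by omega) (by omega)]; ring)
        have t1 : (∑ k ∈ Finset.Ioc 0 i, fcore i j j k)
            + ∑ k ∈ Finset.Ioc i j, fcore i j j k
            = ∑ k ∈ Finset.Ioc 0 j, fcore i j j k :=
          Finset.sum_Ioc_consecutive _ (by omega) (by omega)
        have t2 : (∑ k ∈ Finset.Ioc 0 j, fcore i j j k)
            + ∑ k ∈ Finset.Ioc j n, fcore i j j k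
            = ∑ k ∈ Finset.Ioc 0 n, fcore i j j k :=
          Finset.sum_Ioc_consecutive _ (by omega) (by omega)
        linarith
      · -- D3 : i < l < j
        rw [if_neg (by omega)]
        have s1 := pc (fcore i j l) 1 0 i (by omega)
          (fun k hk1 hk2 => by
            unfold fcore
            rw [Fv_one i j k (by omega) (by omega), Fv_one i k l (by omega) (by omega)]; ring)
        have s2 := pz (fcore i j l) (-1) i l (by omega)
          (fun k hk1 hk2 => by
            unfold fcore
            rw [Fv_neg i j k (by omega) (by omega), Fv_one i k l (by omega) (by omega)]; ring)
          (by unfold fcore; rw [Fv_zero]; ring)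
        have s3 := pz (fcore i j l) 1 l j (by omega)
          (fun k hk1 hk2 => by
            unfold fcore
            rw [Fv_neg i j k (by omega) (by omega), Fv_neg i k l (by omega) (by omega)]; ring)
          (by unfold fcore; rw [Fv_zero]; ring)
        have s4 := pc (fcore i j l) (-1) j n (by omega)
          (fun k hk1 hk2 => by
            unfold fcore
            rw [Fv_one i j k (by omega) (by omega), Fv_neg i k l (by omega) (by omega)]; ring)
        have t1 : (∑ k ∈ Finset.Ioc 0 i, fcore i j l k)
            + ∑ k ∈ Finset.Ioc i l, fcore i j l k
            = ∑ k ∈ Finset.Ioc 0 l, fcore i j l k :=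
          Finset.sum_Ioc_consecutive _ (by omega) (by omega)
        have t2 : (∑ k ∈ Finset.Ioc 0 l, fcore i j l k)
            + ∑ k ∈ Finset.Ioc l j, fcore i j l k
            = ∑ k ∈ Finset.Ioc 0 j, fcore i j l k :=
          Finset.sum_Ioc_consecutive _ (by omega) (by omega)
        have t3 : (∑ k ∈ Finset.Ioc 0 j, fcore i j l k)
            + ∑ k ∈ Finset.Ioc j n, fcore i j l k
            = ∑ k ∈ Finset.Ioc 0 n, fcore i j l k :=
          Finset.sum_Ioc_consecutive _ (by omega) (by omega)
        linarith

lemma entry (n i a b : ℕ) (hodd : Odd n) (hi1 : 1 ≤ i) (hin : i ≤ n)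
    (hane : a ≠ i) (ha1 : 1 ≤ a) (han : a ≤ n)
    (hbne : b ≠ i) (hb1 : 1 ≤ b) (hbn : b ≤ n) :
    ∑ m ∈ (Finset.Icc 1 n).erase i, Fv i a m * ((-1 : ℤ) ^ (m + b) * Fv i m b)
      = if a = b then 1 else 0 := by
  have hsummand : ∀ m, Fv i a m * ((-1 : ℤ) ^ (m + b) * Fv i m b)
      = (-1 : ℤ) ^ b * fcore i a b m := fun m => by
    simp only [fcore, pow_add]; ring
  rw [Finset.sum_erase_eq_sub (show i ∈ Finset.Icc 1 n by rw [Finset.mem_Icc]; omega),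
    show Finset.Icc 1 n = Finset.Ioc 0 n from Finset.Icc_add_one_left_eq_Ioc 0 n,
    Finset.sum_congr rfl fun m _ => hsummand m, ← Finset.mul_sum,
    Fv_one i a i (by omega) (by omega), Fv_one i i b (by omega) (by omega)]
  have hcore := core n i a b hodd hi1 hin ha1 han hane hb1 hbn hbne
  have hsum : ∑ k ∈ Finset.Ioc 0 n, fcore i a b k
      = (-1) ^ i + (if a = b then (-1 : ℤ) ^ b else 0) :=
    mul_left_cancel₀ (by norm_num : (2 : ℤ) ≠ 0) hcore
  rw [hsum, pow_add]
  have hbb : (-1 : ℤ) ^ b * (-1 : ℤ) ^ b = 1 := by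
    rw [← pow_add]; exact Even.neg_one_pow ⟨b, rfl⟩
  by_cases hc : a = b
  · rw [if_pos hc, if_pos hc]; linear_combination hbb
  · rw [if_neg hc, if_neg hc]; ring

/-- For odd `n ≥ 3` and `1 ≤ i ≤ n`, the `n − 1` vectors `w_j`,
`j ∈ {1,…,n}\{i}`, form a `ℤ`-basis of `ℤ^{{1,…,n}\{i}}`; equivalently, the
integer matrix whose rows are the `w_j` has determinant `1` or `−1` (so the
convex hull of `{0} ∪ {w_j}` is a `GL(n−1,ℤ)` image of the standard simplex). -/
theorem stmt_15 (n i : ℕ) (hn : 3 ≤ n) (hodd : Odd n) (hi1 : 1 ≤ i) (hin : i ≤ n) :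
    (Matrix.det (Matrix.of fun j k : stmtIdx n i => stmtW n i j k) = 1 ∨
      Matrix.det (Matrix.of fun j k : stmtIdx n i => stmtW n i j k) = -1) := by
  have key : (Matrix.of fun j k : stmtIdx n i => stmtW n i j k)
      * (Matrix.of fun j k : stmtIdx n i =>
          ((-1 : ℤ) ^ ((j : ℕ) + (k : ℕ)) * stmtW n i j k)) = 1 := by
    ext j l
    have hjm := j.2
    have hlm := l.2
    rw [Finset.mem_erase, Finset.mem_Icc] at hjm hlm
    obtain ⟨hjne, hj1, hjn⟩ := hjm
    obtain ⟨hlne, hl1, hln⟩ := hlm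
    rw [Matrix.mul_apply, Matrix.one_apply]
    simp only [Matrix.of_apply]
    have hW : ∀ a b : stmtIdx n i, stmtW n i a b = Fv i (a : ℕ) (b : ℕ) := fun _ _ => rfl
    simp only [hW, Subtype.ext_iff]
    calc
      ∑ k : stmtIdx n i, Fv i (j : ℕ) (k : ℕ)
          * ((-1 : ℤ) ^ ((k : ℕ) + (l : ℕ)) * Fv i (k : ℕ) (l : ℕ))
          = ∑ m ∈ (Finset.Icc 1 n).erase i,
              Fv i (j : ℕ) m * ((-1 : ℤ) ^ (m + (l : ℕ)) * Fv i m (l : ℕ)) :=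
        Finset.sum_coe_sort ((Finset.Icc 1 n).erase i)
          (fun m => Fv i (j : ℕ) m * ((-1 : ℤ) ^ (m + (l : ℕ)) * Fv i m (l : ℕ)))
      _ = if (j : ℕ) = (l : ℕ) then 1 else 0 :=
        entry n i (j : ℕ) (l : ℕ) hodd hi1 hin hjne hj1 hjn hlne hl1 hln
  exact Int.isUnit_iff.mp (Matrix.isUnit_det_of_right_inverse key)
end
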